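/- arXiv:1912.06652 — 8 statements merged into one kernel-verified Lean document; each statement's English description precedes it below -/
import Mathlib

section
/- For every prime p and every integer k with 1 ≤ k ≤ p-1, we have (p-1)! ≡ -k^(p-1) mod p; in particular summing over k: (p-1)! ≡ -1 + p·∑_{k=1}^{p-1} δ₀(k) mod p², where δ₀(k) is defined by k^(p-1) ≡ 1 + p·δ₀(k) mod p². -/
/-!
The first congruence is Wilson's theorem combined with Fermat's. For the second, write
`(p-1)! = -1 + pW`: as `p - 1` is even and `≡ -1 (mod p)`, the binomial theorem gives
`((p-1)!)^(p-1) = (1 - pW)^(p-1) ≡ 1 + pW = (p-1)! + 2 (mod p²)`, while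
`((p-1)!)^(p-1) = ∏ k^(p-1) ≡ ∏ (1 + p δ₀(k)) ≡ 1 + p ∑ δ₀(k) (mod p²)`
since every cross term of the product is divisible by `p²`.
-/

open Finset
open scoped Nat

namespace Int

theorem prod_one_add_mul_modEq {ι : Type*} (m : ℤ) (f : ι → ℤ) (s : Finset ι) :
    ∏ i ∈ s, (1 + m * f i) ≡ 1 + m * ∑ i ∈ s, f i [ZMOD m ^ 2] := by
  classical
  induction s using Finset.induction_on with
  | empty => simp
  | insert a s has ih =>
    rw [prod_insert has, sum_insert has]
    exact (ih.mul_left _).trans (Int.modEq_iff_dvd.mpr ⟨-(f a * ∑ i ∈ s, f i), by ring⟩)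

theorem pow_modEq_add_two_of_modEq_neg_one {m x : ℤ} {n : ℕ} (hn : Even n)
    (hx : x ≡ -1 [ZMOD m]) (hnm : (n : ℤ) ≡ -1 [ZMOD m]) : x ^ n ≡ x + 2 [ZMOD m ^ 2] := by
  obtain ⟨c, hc⟩ : m ∣ x + 1 := by simpa using Int.modEq_iff_dvd.mp hx.symm
  obtain ⟨d, hd⟩ : m ∣ n + 1 := by simpa using Int.modEq_iff_dvd.mp hnm.symm
  have hbinom : m ^ 2 ∣ x ^ n - (1 - m * c * n) := by
    have e : x ^ n - (1 - m * c * n) = (1 + m * -c) ^ n - 1 ^ (n - 1) * (m * -c) * n - 1 ^ n := by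
      rw [← hn.neg_pow x, show -x = 1 + m * -c by linarith]
      ring
    rw [e]
    exact (Dvd.intro (c ^ 2) (by ring)).trans (_root_.sq_dvd_add_pow_sub_sub (m * -c) 1 n)
  have e : x + 2 - x ^ n = m ^ 2 * (c * d) - (x ^ n - (1 - m * c * n)) := by
    linear_combination hc + m * c * hd
  rw [Int.modEq_iff_dvd, e]
  exact (Dvd.intro _ rfl).sub hbinom

end Int

namespace Nat.Prime

variable {p : ℕ} (hp : p.Prime)
include hp

theorem factorial_pred_modEq_neg_one : ((p - 1)! : ℤ) ≡ -1 [ZMOD p] := by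
  have := Fact.mk hp
  rw [← ZMod.intCast_eq_intCast_iff]
  push_cast
  exact ZMod.wilsons_lemma p

theorem pow_pred_modEq_one {k : ℕ} (hk : k ∈ Icc 1 (p - 1)) :
    (k : ℤ) ^ (p - 1) ≡ 1 [ZMOD p] := by
  have hk' := mem_Icc.mp hk
  refine Int.ModEq.pow_card_sub_one_eq_one hp (Nat.isCoprime_iff_coprime.mpr ?_)
  exact (Nat.coprime_of_lt_prime (by omega) (by omega) hp).symm

theorem factorial_pred_pow_pred_modEq (hodd : Odd p) :
    ((p - 1)! : ℤ) ^ (p - 1) ≡ (p - 1)! + 2 [ZMOD p ^ 2] := by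
  refine Int.pow_modEq_add_two_of_modEq_neg_one (Nat.Odd.sub_odd hodd odd_one)
    hp.factorial_pred_modEq_neg_one ?_
  rw [Nat.cast_sub hp.one_le, Nat.cast_one]
  exact Int.modEq_iff_dvd.mpr ⟨-1, by ring⟩

end Nat.Prime

theorem Nat.factorial_pred_pow_pred_eq_prod (p : ℕ) :
    ((p - 1)! : ℤ) ^ (p - 1) = ∏ k ∈ Icc 1 (p - 1), (k : ℤ) ^ (p - 1) := by
  rw [prod_pow, ← Ico_add_one_right_eq_Icc, ← prod_Ico_id_eq_factorial, Nat.cast_prod]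

theorem stmt_1 (p : ℕ) (hp : p.Prime) (hodd : Odd p)
    (δ₀ : ℕ → ℤ)
    (hδ : ∀ k ∈ Finset.Icc 1 (p - 1),
      (k : ℤ) ^ (p - 1) ≡ 1 + (p : ℤ) * δ₀ k [ZMOD ((p : ℤ) ^ 2)]) :
    (∀ k ∈ Finset.Icc 1 (p - 1),
      ((p - 1).factorial : ℤ) ≡ -(k : ℤ) ^ (p - 1) [ZMOD (p : ℤ)]) ∧
    ((p - 1).factorial : ℤ) ≡
      -1 + (p : ℤ) * ∑ k ∈ Finset.Icc 1 (p - 1), δ₀ k [ZMOD ((p : ℤ) ^ 2)] := by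
  refine ⟨fun k hk =>
    hp.factorial_pred_modEq_neg_one.trans (hp.pow_pred_modEq_one hk).symm.neg, ?_⟩
  have hprod :
      ((p - 1)! : ℤ) ^ (p - 1) ≡ 1 + p * ∑ k ∈ Icc 1 (p - 1), δ₀ k [ZMOD p ^ 2] := by
    rw [Nat.factorial_pred_pow_pred_eq_prod]
    exact (Int.ModEq.prod hδ).trans (Int.prod_one_add_mul_modEq _ _ _)
  refine Int.ModEq.add_right_cancel' 2 ?_
  convert (hp.factorial_pred_pow_pred_modEq hodd).symm.trans hprod using 1
  ring
end

section
/- For every odd prime p, (p-1)! ≡ -p + ∑_{k=1}^{p-1} k^(p-1) mod p². -/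
lemma prod_aux (s : Finset ℕ) (f : ℕ → ℤ) (c : ℤ) :
    ∏ i ∈ s, (1 + c * f i) ≡ 1 + c * ∑ i ∈ s, f i [ZMOD c ^ 2] := by
  classical
  induction s using Finset.induction with
  | empty => simp
  | @insert a s ha ih =>
    rw [Finset.prod_insert ha, Finset.sum_insert ha]
    calc (1 + c * f a) * ∏ i ∈ s, (1 + c * f i)
        ≡ (1 + c * f a) * (1 + c * ∑ i ∈ s, f i) [ZMOD c ^ 2] := ih.mul_left _
      _ ≡ 1 + c * (f a + ∑ i ∈ s, f i) [ZMOD c ^ 2] := by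
          have : (1 + c * (f a + ∑ i ∈ s, f i)) - (1 + c * f a) * (1 + c * ∑ i ∈ s, f i)
              = c ^ 2 * (-(f a * ∑ i ∈ s, f i)) := by ring
          exact (Int.modEq_iff_dvd).2 ⟨_, this⟩

lemma pow_aux (a b : ℤ) : ∀ n : ℕ, (a + b) ^ (n + 1) ≡ a ^ (n + 1) + (n + 1) * a ^ n * b [ZMOD b ^ 2] := by
  intro n
  induction n with
  | zero => simp [Int.ModEq]
  | succ n ih =>
    calc (a + b) ^ (n + 2) = (a + b) ^ (n + 1) * (a + b) := by ring
      _ ≡ (a ^ (n + 1) + (n + 1) * a ^ n * b) * (a + b) [ZMOD b ^ 2] := ih.mul_right _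
      _ ≡ a ^ (n + 2) + (n + 2) * a ^ (n + 1) * b [ZMOD b ^ 2] := by
          have : (a ^ (n + 1) + (n + 1) * a ^ n * b) * (a + b) -
              (a ^ (n + 2) + (n + 2) * a ^ (n + 1) * b) = b ^ 2 * ((n + 1) * a ^ n) := by
            ring
          exact Int.ModEq.symm ((Int.modEq_iff_dvd).2 ⟨(n + 1) * a ^ n, this⟩)

theorem stmt_2 (p : ℕ) (hp : p.Prime) (hodd : Odd p) :
    ((p - 1).factorial : ℤ) ≡
      -(p : ℤ) + ∑ k ∈ Finset.Icc 1 (p - 1), (k : ℤ) ^ (p - 1) [ZMOD ((p : ℤ) ^ 2)] := by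
  haveI := Fact.mk hp
  have hp2 : 2 ≤ p := hp.two_le
  set q : ℕ → ℤ := fun k => ((k : ℤ) ^ (p - 1) - 1) / p with hqdef
  have hdvd : ∀ k ∈ Finset.Icc 1 (p - 1), (p : ℤ) ∣ (k : ℤ) ^ (p - 1) - 1 := by
    intro k hk
    rw [Finset.mem_Icc] at hk
    have hk0 : (k : ZMod p) ≠ 0 := by
      rw [Ne, ZMod.natCast_eq_zero_iff]
      intro h
      have := Nat.le_of_dvd (by omega) h
      omega
    have h1 : (k : ZMod p) ^ (p - 1) = 1 := ZMod.pow_card_sub_one_eq_one hk0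
    have h2 : (((k : ℤ) ^ (p - 1) - 1 : ℤ) : ZMod p) = 0 := by push_cast [h1]; ring
    exact (ZMod.intCast_zmod_eq_zero_iff_dvd _ _).1 h2
  have hq : ∀ k ∈ Finset.Icc 1 (p - 1), (k : ℤ) ^ (p - 1) = 1 + (p : ℤ) * q k := by
    intro k hk
    have := Int.mul_ediv_cancel' (hdvd k hk)
    simp only [hqdef]
    linarith
  -- Wilson
  have hwd : (p : ℤ) ∣ ((p - 1).factorial : ℤ) + 1 := by
    have h1 : (((p - 1).factorial : ℤ) : ZMod p) = -1 := by
      push_cast [ZMod.wilsons_lemma]; ring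
    have h2 : ((((p - 1).factorial : ℤ) + 1 : ℤ) : ZMod p) = 0 := by push_cast [h1]; ring
    exact (ZMod.intCast_zmod_eq_zero_iff_dvd _ _).1 h2
  set w : ℤ := (((p - 1).factorial : ℤ) + 1) / p with hwdef
  have hfac : ((p - 1).factorial : ℤ) = -1 + (p : ℤ) * w := by
    have := Int.mul_ediv_cancel' hwd
    rw [hwdef]; linarith
  -- products
  have E1 : ∏ k ∈ Finset.Icc 1 (p - 1), (k : ℤ) ^ (p - 1)
      = ((p - 1).factorial : ℤ) ^ (p - 1) := by
    rw [Finset.prod_pow]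
    congr 1
    have h1 : ∏ k ∈ Finset.Icc 1 (p - 1), k = (p - 1).factorial := by
      rw [← Finset.Ico_add_one_right_eq_Icc]
      exact Finset.prod_Ico_id_eq_factorial (p - 1)
    rw [← h1]
    push_cast
    rfl
  have E2 : ∏ k ∈ Finset.Icc 1 (p - 1), (k : ℤ) ^ (p - 1)
      = ∏ k ∈ Finset.Icc 1 (p - 1), (1 + (p : ℤ) * q k) := Finset.prod_congr rfl hq
  have E3 := prod_aux (Finset.Icc 1 (p - 1)) q (p : ℤ)
  set S : ℤ := ∑ k ∈ Finset.Icc 1 (p - 1), q k with hSdef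
  -- binomial
  have hev : Even (p - 1) := Nat.Odd.sub_odd hodd odd_one
  have hod : Odd (p - 2) := by
    obtain ⟨m, hm⟩ := hodd
    exact ⟨m - 1, by omega⟩
  have E4 : ((p - 1).factorial : ℤ) ^ (p - 1) ≡ 1 + (p : ℤ) * w [ZMOD (p : ℤ) ^ 2] := by
    have h1 := pow_aux (-1) ((p : ℤ) * w) (p - 2)
    have hpe : p - 2 + 1 = p - 1 := by omega
    rw [hpe] at h1
    have h2 : ((p : ℤ) ^ 2) ∣ ((p : ℤ) * w) ^ 2 := ⟨w ^ 2, by ring⟩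
    have h3 := (Int.ModEq.of_dvd h2 h1)
    rw [hfac]
    have h4 : (-1 : ℤ) ^ (p - 1) = 1 := hev.neg_one_pow
    have h5 : (-1 : ℤ) ^ (p - 2) = -1 := hod.neg_one_pow
    rw [h4, h5] at h3
    have hc : ((p - 2 : ℕ) : ℤ) + 1 = (p : ℤ) - 1 := by omega
    rw [hc] at h3
    calc (-1 + (p : ℤ) * w) ^ (p - 1)
        ≡ 1 + ((p : ℤ) - 1) * -1 * ((p : ℤ) * w) [ZMOD (p : ℤ) ^ 2] := h3
      _ ≡ 1 + (p : ℤ) * w [ZMOD (p : ℤ) ^ 2] := (Int.modEq_iff_dvd).2 ⟨w, by ring⟩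
  -- combine
  have key : 1 + (p : ℤ) * S ≡ 1 + (p : ℤ) * w [ZMOD (p : ℤ) ^ 2] := by
    calc 1 + (p : ℤ) * S ≡ ∏ k ∈ Finset.Icc 1 (p - 1), (1 + (p : ℤ) * q k)
          [ZMOD (p : ℤ) ^ 2] := E3.symm
      _ = ∏ k ∈ Finset.Icc 1 (p - 1), (k : ℤ) ^ (p - 1) := E2.symm
      _ = ((p - 1).factorial : ℤ) ^ (p - 1) := E1
      _ ≡ 1 + (p : ℤ) * w [ZMOD (p : ℤ) ^ 2] := E4
  have h6 : (p : ℤ) * S ≡ (p : ℤ) * w [ZMOD (p : ℤ) ^ 2] := key.add_left_cancel' 1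
  have hsum : ∑ k ∈ Finset.Icc 1 (p - 1), (k : ℤ) ^ (p - 1)
      = ((p - 1 : ℕ) : ℤ) + (p : ℤ) * S := by
    rw [Finset.sum_congr rfl hq, Finset.sum_add_distrib, Finset.sum_const, Finset.mul_sum,
      Nat.card_Icc]
    simp [hSdef, Finset.mul_sum]
  have hcast : ((p - 1 : ℕ) : ℤ) = (p : ℤ) - 1 := by omega
  rw [hsum, hcast, hfac]
  calc -1 + (p : ℤ) * w ≡ -1 + (p : ℤ) * S [ZMOD (p : ℤ) ^ 2] := (h6.symm).add_left (-1)
    _ = -(p : ℤ) + ((p : ℤ) - 1 + (p : ℤ) * S) := by ring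
end

section
/- (Glaisher 1900) For every odd prime p, (p-1)! ≡ p·B_{p-1} - p mod p², where B_{p-1} is the (p-1)-th Bernoulli number; note p·B_{p-1} is a p-adic integer. -/
/-!
Faulhaber's formula for the sum of `m`-th powers below `p` reads
`p B_m = ∑_{k<p} k^m - ∑_{i<m} B_i (m choose i) p^(m+1-i) / (m+1-i)`.
Every `p^j / j` with `j ≥ 1` has positive `p`-adic valuation, so strong induction on `m` gives
`‖p B_m‖ ≤ 1`. For `m = p - 1` the lower terms are even divisible by `p²`: `B_i = 0` for odd
`i > 1`, and for even `2 ≤ i ≤ p - 3` the factor `p^(p-i)` beats the single `p` in the denominator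
of `B_i`. Hence `p B_{p-1} ≡ ∑_{k<p} k^(p-1) mod p²`. Finally, if `a^(p-1) = 1 + p q_a`, then
`∏ (1 + p q_a) ≡ 1 + p ∑ q_a mod p²`; the product is `((p-1)!)^(p-1)`, which is `≡ (p-1)! + 2` by
Wilson's theorem, so `∑_{0<a<p} a^(p-1) ≡ (p-1)! + p mod p²`.
-/

open Finset Nat

theorem Int.prod_modEq_one_add_sum {ι : Type*} {s : Finset ι} {n : ℤ} {u : ι → ℤ}
    (hu : ∀ i ∈ s, u i ≡ 1 [ZMOD n]) :
    ∏ i ∈ s, u i ≡ 1 + ∑ i ∈ s, (u i - 1) [ZMOD n ^ 2] := by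
  classical
  induction s using Finset.induction_on with
  | empty => simp [Int.ModEq.refl]
  | insert a s ha ih =>
    rw [forall_mem_insert] at hu
    have hs : n ^ 2 ∣ 1 + ∑ i ∈ s, (u i - 1) - ∏ i ∈ s, u i := (ih hu.2).dvd
    have hprod : n ∣ ∏ i ∈ s, u i - 1 := (Int.ModEq.prod_one hu.2).symm.dvd
    have hcross : n ^ 2 ∣ (u a - 1) * (∏ i ∈ s, u i - 1) :=
      sq n ▸ mul_dvd_mul hu.1.symm.dvd hprod
    rw [prod_insert ha, sum_insert ha, Int.modEq_iff_dvd]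
    exact (dvd_sub hs hcross).trans (dvd_of_eq (by ring))

theorem Int.pow_modEq_one_add_mul {n x : ℤ} (hx : x ≡ 1 [ZMOD n]) (m : ℕ) :
    x ^ m ≡ 1 + m * (x - 1) [ZMOD n ^ 2] := by
  simpa [mul_sub] using Int.prod_modEq_one_add_sum (s := Finset.range m) fun _ _ ↦ hx

-- The terms `i < m` of Faulhaber's formula, with `(m+1 choose i) / (m+1)` rewritten as
-- `(m choose i) / (m+1-i)` so that each term visibly has a factor `n^j / j`.
def faulhaberTail (n m : ℕ) : ℚ :=
  ∑ i ∈ range m, bernoulli i * m.choose i * ((n : ℚ) ^ (m + 1 - i) / (m + 1 - i : ℕ))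

theorem natCast_mul_bernoulli_eq (n m : ℕ) :
    n * bernoulli m = ∑ k ∈ range n, (k : ℚ) ^ m - faulhaberTail n m := by
  have hterm : ∀ i ∈ range m, bernoulli i * (m + 1).choose i * (n : ℚ) ^ (m + 1 - i) / (m + 1) =
      bernoulli i * m.choose i * ((n : ℚ) ^ (m + 1 - i) / (m + 1 - i : ℕ)) := by
    intro i hi
    have hi : i < m := mem_range.mp hi
    have hchoose : (m.choose i : ℚ) * (m + 1) = (m + 1).choose i * (m + 1 - i : ℕ) := by
      exact_mod_cast choose_mul_succ_eq m i
    have : ((m + 1 - i : ℕ) : ℚ) ≠ 0 := by norm_cast; omega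
    field_simp
    linear_combination -(bernoulli i * (n : ℚ) ^ (m + 1 - i)) * hchoose
  rw [faulhaberTail, sum_range_pow, sum_range_succ, sum_congr rfl hterm, choose_succ_self_right,
    Nat.add_sub_cancel_left, pow_one]
  field_simp
  push_cast
  ring

variable {p : ℕ} [hp : Fact p.Prime]

theorem factorial_pow_modEq_factorial_add_two (hodd : Odd p) :
    (((p - 1)! : ℕ) : ℤ) ^ (p - 1) ≡ ((p - 1)! : ℕ) + 2 [ZMOD p ^ 2] := by
  obtain ⟨m, hm⟩ := hodd
  set W : ℤ := ↑(p - 1)!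
  have hW : (W : ZMod p) = -1 := by simp [W, ZMod.wilsons_lemma]
  have hW2 : W ^ 2 ≡ 1 [ZMOD p] := by
    rw [← ZMod.intCast_eq_intCast_iff]; push_cast; rw [hW]; ring
  have hdvd : (p : ℤ) ^ 2 ∣ (W + 1) * (1 - m * (W - 1)) := by
    rw [sq]
    refine mul_dvd_mul ((ZMod.intCast_zmod_eq_zero_iff_dvd _ _).mp ?_)
      ((ZMod.intCast_zmod_eq_zero_iff_dvd _ _).mp ?_)
    · push_cast; rw [hW]; ring
    · have : ((2 * m + 1 : ℕ) : ZMod p) = 0 := by rw [← hm, ZMod.natCast_self]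
      push_cast at this ⊢; rw [hW]; linear_combination this
  calc W ^ (p - 1) = (W ^ 2) ^ m := by rw [← pow_mul]; congr 1; omega
    _ ≡ 1 + m * (W ^ 2 - 1) [ZMOD p ^ 2] := Int.pow_modEq_one_add_mul hW2 m
    _ ≡ W + 2 [ZMOD p ^ 2] := by
      rw [Int.modEq_iff_dvd]; exact hdvd.trans (dvd_of_eq (by ring))

theorem sum_range_pow_pred_modEq_factorial_add (hodd : Odd p) :
    ∑ k ∈ range p, (k : ℤ) ^ (p - 1) ≡ ((p - 1)! : ℕ) + p [ZMOD p ^ 2] := by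
  have hp1 : p - 1 ≠ 0 := by have := hp.out.two_le; omega
  have hfermat : ∀ i ∈ range (p - 1), ((i + 1 : ℕ) : ℤ) ^ (p - 1) ≡ 1 [ZMOD p] := by
    intro i hi
    refine Int.ModEq.pow_card_sub_one_eq_one hp.out ?_
    rw [Int.isCoprime_iff_gcd_eq_one, Int.gcd_natCast_natCast, Nat.gcd_comm]
    exact coprime_of_lt_prime (by omega) (by have := mem_range.mp hi; omega) hp.out
  have hprod : ∏ i ∈ range (p - 1), ((i + 1 : ℕ) : ℤ) ^ (p - 1) =
      (((p - 1)! : ℕ) : ℤ) ^ (p - 1) := by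
    rw [prod_pow, ← Nat.cast_prod, prod_range_add_one_eq_factorial]
  have key := Int.prod_modEq_one_add_sum hfermat
  rw [hprod, sum_sub_distrib, sum_const, card_range, nsmul_one] at key
  have hsum : ∑ k ∈ range p, (k : ℤ) ^ (p - 1) =
      ∑ i ∈ range (p - 1), ((i + 1 : ℕ) : ℤ) ^ (p - 1) := by
    conv_lhs => rw [← Nat.sub_add_cancel hp.out.one_le, sum_range_succ']
    simp [hp1]
  rw [hsum]
  have h := ((factorial_pow_modEq_factorial_add_two hodd).symm.trans key).dvd
  rw [Nat.cast_sub hp.out.one_le] at h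
  refine Int.modEq_iff_dvd.mpr ((dvd_neg.mpr h).trans (dvd_of_eq ?_))
  push_cast
  ring

namespace Padic

theorem norm_natCast_eq_zpow_neg_padicValNat {k : ℕ} (hk : k ≠ 0) :
    ‖(k : ℚ_[p])‖ = (p : ℝ) ^ (-(padicValNat p k : ℤ)) := by
  rw [norm_eq_zpow_neg_valuation (by exact_mod_cast hk), valuation_natCast]

theorem norm_p_pow_div_natCast_le {k : ℕ} (hk : k ≠ 0) :
    ‖(p : ℚ_[p]) ^ k / k‖ ≤ (p : ℝ)⁻¹ := by
  have hv := padicValNat_lt_self (p := p) hk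
  rw [norm_div, norm_p_pow, norm_natCast_eq_zpow_neg_padicValNat hk,
    ← zpow_sub₀ (by simp [hp.out.ne_zero]), ← zpow_neg_one]
  exact zpow_le_zpow_right₀ (by exact_mod_cast hp.out.one_le) (by omega)

theorem norm_p_pow_div_natCast_of_coprime {k : ℕ} (hk : p.Coprime k) :
    ‖(p : ℚ_[p]) ^ k / k‖ = (p : ℝ) ^ (-k : ℤ) := by
  rw [norm_div, norm_p_pow, norm_natCast_eq_one_iff.mpr hk, div_one]

theorem exists_eq_p_pow_mul_of_norm_le {x : ℚ_[p]} {n : ℕ} (hx : ‖x‖ ≤ (p : ℝ) ^ (-n : ℤ)) :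
    ∃ z : ℤ_[p], x = p ^ n * z := by
  have hp0 : (p : ℚ_[p]) ^ n ≠ 0 := pow_ne_zero _ (by exact_mod_cast hp.out.ne_zero)
  refine ⟨⟨x / p ^ n, ?_⟩, by simp [mul_div_cancel₀ _ hp0]⟩
  rw [norm_div, norm_p_pow, div_le_one (zpow_pos (by exact_mod_cast hp.out.pos) _)]
  exact hx

theorem norm_le_of_norm_p_mul_le_one {x : ℚ_[p]} (hx : ‖(p : ℚ_[p]) * x‖ ≤ 1) : ‖x‖ ≤ p := by
  rwa [norm_mul, norm_p, inv_mul_le_iff₀ (by exact_mod_cast hp.out.pos), mul_one] at hx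

theorem norm_faulhaberTail_le {m : ℕ} {C : ℝ} (hC : 0 ≤ C)
    (h : ∀ i < m, ‖(bernoulli i : ℚ_[p])‖ * ‖(p : ℚ_[p]) ^ (m + 1 - i) / (m + 1 - i : ℕ)‖ ≤ C) :
    ‖(faulhaberTail p m : ℚ_[p])‖ ≤ C := by
  rw [faulhaberTail]
  push_cast
  refine IsUltrametricDist.norm_sum_le_of_forall_le_of_nonneg hC fun i hi ↦ ?_
  refine le_trans ?_ (h i (mem_range.mp hi))
  rw [norm_mul, norm_mul]
  have hchoose : ‖((m.choose i : ℤ) : ℚ_[p])‖ ≤ 1 := norm_int_le_one _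
  push_cast at hchoose
  gcongr
  exact mul_le_of_le_one_right (norm_nonneg _) hchoose

theorem natCast_mul_bernoulli_eq_sub_faulhaberTail (m : ℕ) :
    (p : ℚ_[p]) * bernoulli m =
      ((∑ k ∈ range p, (k : ℤ) ^ m : ℤ) : ℚ_[p]) - faulhaberTail p m := by
  have h := congrArg (Rat.cast : ℚ → ℚ_[p]) (natCast_mul_bernoulli_eq p m)
  push_cast at h ⊢
  exact h

theorem norm_p_mul_bernoulli_le_one (m : ℕ) : ‖(p : ℚ_[p]) * bernoulli m‖ ≤ 1 := by
  induction m using Nat.strong_induction_on with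
  | _ m ih =>
  have htail : ‖(faulhaberTail p m : ℚ_[p])‖ ≤ 1 := by
    refine norm_faulhaberTail_le zero_le_one fun i hi ↦ ?_
    calc _ ≤ (p : ℝ) * (p : ℝ)⁻¹ :=
          mul_le_mul (norm_le_of_norm_p_mul_le_one (ih i hi))
            (norm_p_pow_div_natCast_le (by omega)) (norm_nonneg _) (by positivity)
      _ = 1 := mul_inv_cancel₀ (by exact_mod_cast hp.out.ne_zero)
  rw [natCast_mul_bernoulli_eq_sub_faulhaberTail, sub_eq_add_neg]
  refine (IsUltrametricDist.norm_add_le_max _ _).trans (max_le (norm_int_le_one _) ?_)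
  rwa [norm_neg]

theorem norm_bernoulli_le (m : ℕ) : ‖(bernoulli m : ℚ_[p])‖ ≤ p :=
  norm_le_of_norm_p_mul_le_one (norm_p_mul_bernoulli_le_one m)

theorem norm_faulhaberTail_pred_le (hodd : Odd p) :
    ‖(faulhaberTail p (p - 1) : ℚ_[p])‖ ≤ (p : ℝ) ^ (-2 : ℤ) := by
  have hp3 : 3 ≤ p := by have := hp.out.two_le; obtain ⟨k, rfl⟩ := hodd; omega
  have hp0 : (0 : ℝ) < p := by exact_mod_cast hp.out.pos
  have hmono : ∀ {a b : ℤ}, a ≤ b → (p : ℝ) ^ a ≤ (p : ℝ) ^ b :=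
    zpow_le_zpow_right₀ (by exact_mod_cast hp.out.one_le)
  refine norm_faulhaberTail_le (by positivity) fun i hi ↦ ?_
  rw [Nat.sub_add_cancel hp.out.one_le]
  rcases Nat.eq_zero_or_pos i with rfl | hi0
  · have : (p : ℚ_[p]) ^ (p - 0) / (p - 0 : ℕ) = (p : ℚ_[p]) ^ (p - 1) := by
      rw [Nat.sub_zero, div_eq_iff (by exact_mod_cast hp.out.ne_zero), ← pow_succ,
        Nat.sub_add_cancel hp.out.one_le]
    rw [this, bernoulli_zero, Rat.cast_one, norm_one, one_mul, norm_p_pow]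
    exact hmono (by omega)
  rw [norm_p_pow_div_natCast_of_coprime (coprime_of_lt_prime (by omega) (by omega) hp.out)]
  rcases Nat.even_or_odd i with heven | hodd_i
  · have hi2 : i ≤ p - 3 := by obtain ⟨k, rfl⟩ := hodd; obtain ⟨j, rfl⟩ := heven; omega
    calc _ ≤ (p : ℝ) ^ (1 : ℤ) * (p : ℝ) ^ (-(p - i : ℕ) : ℤ) := by
          rw [zpow_one]; gcongr; exact norm_bernoulli_le i
      _ ≤ (p : ℝ) ^ (-2 : ℤ) := by rw [← zpow_add₀ hp0.ne']; exact hmono (by omega)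
  · rcases (Nat.one_le_iff_ne_zero.mpr hi0.ne').eq_or_lt with rfl | hi1
    · have h2 : ‖((2 : ℕ) : ℚ_[p])‖ = 1 :=
        norm_natCast_eq_one_iff.mpr (coprime_two_right.mpr hodd)
      rw [bernoulli_one]
      push_cast at h2 ⊢
      rw [norm_div, norm_neg, norm_one, h2, div_one, one_mul]
      exact hmono (by omega)
    · rw [bernoulli_eq_zero_of_odd hodd_i hi1, Rat.cast_zero, norm_zero, zero_mul]
      positivity

end Padic

theorem stmt_3 (p : ℕ) [hp : Fact p.Prime] (hodd : Odd p) :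
    (∃ w : ℤ_[p], (p : ℚ_[p]) * (bernoulli (p - 1) : ℚ_[p]) = w) ∧
    ∃ z : ℤ_[p], ((p - 1).factorial : ℚ_[p]) =
      (p : ℚ_[p]) * (bernoulli (p - 1) : ℚ_[p]) - (p : ℚ_[p]) + (p : ℚ_[p]) ^ 2 * z := by
  refine ⟨⟨⟨_, Padic.norm_p_mul_bernoulli_le_one (p - 1)⟩, rfl⟩, ?_⟩
  obtain ⟨c, hc⟩ := (sum_range_pow_pred_modEq_factorial_add hodd).dvd
  obtain ⟨t, ht⟩ :=
    Padic.exists_eq_p_pow_mul_of_norm_le (n := 2) (Padic.norm_faulhaberTail_pred_le hodd)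
  refine ⟨c + t, ?_⟩
  have hS := congrArg (Int.cast : ℤ → ℚ_[p]) hc
  rw [Padic.natCast_mul_bernoulli_eq_sub_faulhaberTail, ht]
  push_cast at hS ⊢
  linear_combination hS
end

section
/- (Bayat's generalization of Wolstenholme's theorem) Let m be a positive integer and p a prime with p ≥ m+3. Then ∑_{k=1}^{p-1} 1/k^m ≡ 0 mod p if m is even, and ∑_{k=1}^{p-1} 1/k^m ≡ 0 mod p² if m is odd. -/
/-!
Work in `ℤ_[p]`, where `1, …, p - 1` are units, with `S m = ∑_{k=1}^{p-1} k⁻ᵐ`. Modulo `p`, the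
sum runs over `(ℤ/p)ˣ`, so `S m ≡ ∑_{x ∈ 𝔽_p} xᵐ = 0` as long as `m < p - 1`. For odd `m`, pair `k`
with `p - k`: modulo `p²` the binomial theorem gives `(p - k)⁻ᵐ ≡ -k⁻ᵐ - m p k⁻ᵐ⁻¹`, hence
`2 S m ≡ -m p S (m + 1)`, which vanishes modulo `p²` because `p ∣ S (m + 1)` when `m + 1 < p - 1`.
-/

open Finset Ring

section CommRing

variable {R S : Type*} [CommRing R] [CommRing S]

lemma add_pow_of_sq_eq_zero (a : R) {c : R} (hc : c ^ 2 = 0) (n : ℕ) :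
    (a + c) ^ n = a ^ n + n * a ^ (n - 1) * c := by
  have h := sq_dvd_add_pow_sub_sub c a n
  rw [hc, zero_dvd_iff, sub_eq_zero, sub_eq_iff_eq_add] at h
  rw [h]
  ring

lemma inverse_pow_add_inverse_sub_pow {a c : R} (ha : IsUnit a) (hc : c ^ 2 = 0) {n : ℕ}
    (hn : Odd n) : (a ^ n)⁻¹ʳ + ((c - a) ^ n)⁻¹ʳ = -(n * c * (a ^ (n + 1))⁻¹ʳ) := by
  have hca : IsUnit (c - a) := by
    rw [sub_eq_add_neg]
    exact (IsNilpotent.mk c 2 hc).isUnit_add_right_of_commute ha.neg (Commute.all _ _)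
  have hx := inverse_mul_cancel _ (ha.pow n)
  have hy := inverse_mul_cancel _ (hca.pow n)
  have hz := inverse_mul_cancel _ (ha.pow (n + 1))
  obtain ⟨k, rfl⟩ := hn
  have hexp : (c - a) ^ (2 * k + 1) = -a ^ (2 * k + 1) + (2 * k + 1) * a ^ (2 * k) * c := by
    rw [sub_eq_neg_add, add_pow_of_sq_eq_zero _ hc, Nat.add_sub_cancel, Odd.neg_pow ⟨k, rfl⟩,
      Even.neg_pow ⟨k, two_mul k⟩]
    push_cast
    ring
  set x := (a ^ (2 * k + 1))⁻¹ʳ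
  set y := ((c - a) ^ (2 * k + 1))⁻¹ʳ
  set z := (a ^ (2 * k + 1 + 1))⁻¹ʳ
  rw [hexp] at hy
  push_cast
  -- `x + y = x y ((c - a)ⁿ + aⁿ)`, while `c y = -c x` and `x² a²ᵏ = z`.
  linear_combination
    (-(2 * k + 1) * c * z * (x * a ^ (2 * k + 1) + 1) - (2 * k + 1) * a ^ (2 * k) * c * x * y
      - y) * hx
    + (-(2 * k + 1) * a ^ (2 * k) * c * x ^ 2 - x) * hy
    + (2 * k + 1) * c * x ^ 2 * a ^ (2 * k) * hz
    + (2 * k + 1) ^ 2 * a ^ (4 * k) * x ^ 2 * y * hc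

lemma RingHom.map_inverse (f : R →+* S) {x : R} (hx : IsUnit x) : f x⁻¹ʳ = (f x)⁻¹ʳ := by
  rw [← one_mul (f x)⁻¹ʳ, eq_mul_inverse_iff_mul_eq _ _ _ (hx.map f), ← map_mul,
    inverse_mul_cancel _ hx, map_one]

lemma Finset.sum_Icc_reflect {M : Type*} [AddCommMonoid M] (g : ℕ → M) (p : ℕ) :
    ∑ k ∈ Icc 1 (p - 1), g (p - k) = ∑ k ∈ Icc 1 (p - 1), g k := by
  refine sum_nbij' (p - ·) (p - ·) ?_ ?_ ?_ ?_ fun _ _ => rfl <;> intro k hk <;>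
    simp only [mem_Icc] at hk ⊢ <;> omega

variable (R) in
noncomputable def invPowSum (p m : ℕ) : R :=
  ∑ k ∈ Icc 1 (p - 1), ((k : R) ^ m)⁻¹ʳ

lemma map_invPowSum {p : ℕ} (hunit : ∀ k ∈ Icc 1 (p - 1), IsUnit (k : R)) (f : R →+* S)
    (m : ℕ) : f (invPowSum R p m) = invPowSum S p m := by
  simp only [invPowSum, map_sum]
  refine sum_congr rfl fun k hk => ?_
  rw [f.map_inverse ((hunit k hk).pow m), map_pow, map_natCast]

lemma two_mul_invPowSum {p : ℕ} (hunit : ∀ k ∈ Icc 1 (p - 1), IsUnit (k : R))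
    (hp : (p : R) ^ 2 = 0) {m : ℕ} (hm : Odd m) :
    2 * invPowSum R p m = -(m * p * invPowSum R p (m + 1)) := by
  have hpair : ∀ k ∈ Icc 1 (p - 1),
      ((k : R) ^ m)⁻¹ʳ + (((p - k : ℕ) : R) ^ m)⁻¹ʳ = -(m * p * ((k : R) ^ (m + 1))⁻¹ʳ) := by
    intro k hk
    rw [Nat.cast_sub (by grind)]
    exact inverse_pow_add_inverse_sub_pow (hunit k hk) hp hm
  rw [invPowSum, invPowSum, two_mul]
  nth_rewrite 2 [← sum_Icc_reflect]
  rw [← sum_add_distrib, sum_congr rfl hpair, sum_neg_distrib, mul_sum]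

end CommRing

lemma ZMod.sum_Icc_natCast {M : Type*} [AddCommMonoid M] {n : ℕ} [NeZero n] (f : ZMod n → M) :
    ∑ k ∈ Icc 1 (n - 1), f k = ∑ x ∈ univ.erase 0, f x := by
  have hn := NeZero.pos n
  refine sum_nbij' (↑) ZMod.val (fun k hk => ?_) (fun x hx => ?_) (fun k hk => ?_)
    (fun x _ => ZMod.natCast_zmod_val x) fun _ _ => rfl
  · rw [mem_Icc] at hk
    rw [mem_erase, ← ZMod.val_ne_zero, ZMod.val_cast_of_lt (by omega)]
    exact ⟨by omega, mem_univ _⟩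
  · rw [mem_erase, ← ZMod.val_ne_zero] at hx
    have := x.val_lt
    rw [mem_Icc]
    omega
  · rw [mem_Icc] at hk
    exact ZMod.val_cast_of_lt (by omega)

lemma FiniteField.sum_inv_pow_eq_zero {K : Type*} [Field K] [Fintype K] {n : ℕ}
    (h : n < Fintype.card K - 1) : ∑ x : K, (x ^ n)⁻¹ = 0 := by
  simp_rw [← inv_pow]
  exact Equiv.sum_comp (Equiv.inv K) (· ^ n) ▸ FiniteField.sum_pow_lt_card_sub_one K n h

variable {p : ℕ} [Fact p.Prime] {m : ℕ}

lemma ZMod.invPowSum_eq_zero (hm0 : m ≠ 0) (hm : m < p - 1) : invPowSum (ZMod p) p m = 0 := by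
  rw [invPowSum, inverse_eq_inv', ZMod.sum_Icc_natCast (fun x => (x ^ m)⁻¹),
    sum_erase _ (by simp [hm0])]
  exact FiniteField.sum_inv_pow_eq_zero (by rwa [ZMod.card])

namespace PadicInt

lemma isUnit_natCast_of_mem_Icc {k : ℕ} (hk : k ∈ Icc 1 (p - 1)) : IsUnit (k : ℤ_[p]) := by
  rw [mem_Icc] at hk
  have := (Fact.out : p.Prime).one_lt
  exact isUnit_iff.mpr <| norm_natCast_eq_one_iff.mpr <|
    Nat.coprime_of_lt_prime (by omega) (by omega) Fact.out

lemma coe_invPowSum :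
    ((invPowSum ℤ_[p] p m : ℤ_[p]) : ℚ_[p]) = ∑ k ∈ Icc 1 (p - 1), 1 / (k : ℚ_[p]) ^ m := by
  change Coe.ringHom _ = _
  rw [map_invPowSum (fun _ => isUnit_natCast_of_mem_Icc), invPowSum, inverse_eq_inv']
  simp only [one_div]

lemma dvd_invPowSum (hm0 : m ≠ 0) (hm : m < p - 1) : (p : ℤ_[p]) ∣ invPowSum ℤ_[p] p m := by
  rw [← Ideal.mem_span_singleton, ← maximalIdeal_eq_span_p, ← ker_toZMod, RingHom.mem_ker,
    map_invPowSum (fun _ => isUnit_natCast_of_mem_Icc), ZMod.invPowSum_eq_zero hm0 hm]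

lemma sq_dvd_invPowSum (hm : Odd m) (hpm : m + 3 ≤ p) :
    (p : ℤ_[p]) ^ 2 ∣ invPowSum ℤ_[p] p m := by
  set π := Ideal.Quotient.mk (Ideal.span {(p : ℤ_[p]) ^ 2})
  have hunit : ∀ k ∈ Icc 1 (p - 1), IsUnit (k : ℤ_[p]) := fun _ => isUnit_natCast_of_mem_Icc
  have hp : (p : ℤ_[p] ⧸ Ideal.span {(p : ℤ_[p]) ^ 2}) ^ 2 = 0 := by
    rw [← map_natCast π, ← map_pow, Ideal.Quotient.eq_zero_iff_dvd]
  obtain ⟨w, hw⟩ := dvd_invPowSum (p := p) (m := m + 1) (by omega) (by omega)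
  have h2 : π (2 * invPowSum ℤ_[p] p m) = 0 := by
    rw [map_mul, map_ofNat, map_invPowSum hunit,
      two_mul_invPowSum (fun k hk => (hunit k hk).map π) hp hm,
      ← map_invPowSum hunit π, hw, map_mul, map_natCast]
    linear_combination (-(m * π w)) * hp
  have h2unit : IsUnit (2 : ℤ_[p]) := by
    exact_mod_cast isUnit_natCast_of_mem_Icc (k := 2) (mem_Icc.mpr ⟨by omega, by omega⟩)
  rwa [Ideal.Quotient.eq_zero_iff_dvd, h2unit.dvd_mul_left] at h2

end PadicInt

theorem stmt_8 (p m : ℕ) [hp : Fact p.Prime] (hm : 1 ≤ m) (hpm : m + 3 ≤ p) :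
    (Even m → ∃ z : ℤ_[p],
      (∑ k ∈ Finset.Icc 1 (p - 1), 1 / (k : ℚ_[p]) ^ m) = (p : ℚ_[p]) * z) ∧
    (Odd m → ∃ z : ℤ_[p],
      (∑ k ∈ Finset.Icc 1 (p - 1), 1 / (k : ℚ_[p]) ^ m) = (p : ℚ_[p]) ^ 2 * z) := by
  rw [← PadicInt.coe_invPowSum]
  refine ⟨fun _ => ?_, fun hodd => ?_⟩
  · obtain ⟨z, hz⟩ := PadicInt.dvd_invPowSum (p := p) (m := m) (by omega) (by omega)
    exact ⟨z, by rw [hz]; push_cast; rfl⟩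
  · obtain ⟨z, hz⟩ := PadicInt.sq_dvd_invPowSum hodd hpm
    exact ⟨z, by rw [hz]; push_cast; rfl⟩
end

section
/- (Sun) For every odd prime p and 1 ≤ k ≤ p-1, the elementary symmetric polynomial A_k of 1, 2, ..., p-1 satisfies A_k ≡ ((-1)^(k-1)/k)·S_k mod p², where S_k = ∑_{l=1}^{p-1} l^k. -/
/-!
Newton's identity, evaluated at `1, …, p - 1`, reads
`S_k = (-1)^(k+1) k A_k - ∑_{0<i<k} (-1)^i A_i S_(k-i)`.
For `0 < j < p - 1` the power sum `S_j` is `∑_{x ∈ 𝔽_p} x^j = 0` mod `p`, and then the same identity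
mod `p` gives `p ∣ A_j` (as `p ∤ j`). So each term `A_i S_(k-i)` of the sum is divisible by `p²`,
and dividing by the `p`-adic unit `k` gives the congruence.
-/

/-- The `k`-th elementary symmetric function of `1, 2, …, n`. -/
def esymmA (n k : ℕ) : ℕ :=
  ∑ t ∈ (Finset.Icc 1 n).powersetCard k, ∏ i ∈ t, i

open Finset MvPolynomial

def powerSumA (n j : ℕ) : ℕ :=
  ∑ l ∈ Icc 1 n, l ^ j

theorem ZMod.sum_eq_sum_range {M : Type*} [AddCommMonoid M] {n : ℕ} [NeZero n]
    (f : ZMod n → M) : ∑ x, f x = ∑ i ∈ range n, f i := by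
  obtain ⟨m, rfl⟩ : ∃ m, n = m + 1 := Nat.exists_eq_succ_of_ne_zero (NeZero.ne n)
  rw [← Fin.sum_univ_eq_sum_range (fun i => f i)]
  exact sum_congr rfl fun i _ => congrArg f (Fin.cast_val_eq_self i).symm

theorem ZMod.sum_Icc_pow_eq_zero {p j : ℕ} [Fact p.Prime] (hj : 0 < j) (hjp : j < p - 1) :
    ∑ l ∈ Icc 1 (p - 1), (l : ZMod p) ^ j = 0 := by
  have hIcc : Icc 1 (p - 1) = (range p).erase 0 := by
    ext m; simp only [mem_Icc, mem_erase, mem_range]; omega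
  rw [hIcc, sum_erase _ (by simp [hj.ne']), ← ZMod.sum_eq_sum_range (· ^ j)]
  exact FiniteField.sum_pow_lt_card_sub_one (K := ZMod p) _ (by rwa [ZMod.card])

def succEmb (n : ℕ) : Fin n ↪ ℕ :=
  ⟨fun i => i + 1, fun _ _ h => Fin.val_injective (Nat.succ_injective h)⟩

@[simp]
theorem succEmb_apply (n : ℕ) (i : Fin n) : succEmb n i = i + 1 := rfl

theorem univ_map_succEmb (n : ℕ) : univ.map (succEmb n) = Icc 1 n := by
  ext m
  simp only [mem_map, mem_univ, true_and, mem_Icc, succEmb_apply]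
  constructor
  · rintro ⟨i, rfl⟩; omega
  · rintro ⟨h1, h2⟩; exact ⟨⟨m - 1, by omega⟩, Nat.sub_add_cancel h1⟩

section
variable {R : Type*} [CommSemiring R] (n : ℕ)

theorem eval_esymm_succ (j : ℕ) :
    eval (fun i : Fin n => (i + 1 : R)) (esymm (Fin n) R j) = esymmA n j := by
  rw [esymm, esymmA, ← univ_map_succEmb, powersetCard_map, sum_map, map_sum]
  push_cast
  refine sum_congr rfl fun t _ => ?_
  simp [prod_map]

theorem eval_psum_succ (j : ℕ) :
    eval (fun i : Fin n => (i + 1 : R)) (psum (Fin n) R j) = powerSumA n j := by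
  simp [psum, powerSumA, ← univ_map_succEmb]

end

theorem powerSumA_eq_mul_esymmA_sub_sum {R : Type*} [CommRing R] (n : ℕ) {k : ℕ} (hk : 0 < k) :
    (powerSumA n k : R) = (-1) ^ (k + 1) * k * esymmA n k -
      ∑ a ∈ antidiagonal k with a.1 ∈ Set.Ioo 0 k,
        (-1) ^ a.1 * esymmA n a.1 * (powerSumA n a.2 : R) := by
  simpa [eval_esymm_succ, eval_psum_succ] using
    congrArg (eval (fun i : Fin n => (i + 1 : R))) (psum_eq_mul_esymm_sub_sum (Fin n) R k hk)

section
variable {p : ℕ} [Fact p.Prime]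

theorem prime_dvd_powerSumA {j : ℕ} (hj : 0 < j) (hjp : j < p - 1) :
    p ∣ powerSumA (p - 1) j := by
  rw [← ZMod.natCast_eq_zero_iff]
  simpa [powerSumA] using ZMod.sum_Icc_pow_eq_zero hj hjp

theorem prime_dvd_esymmA {j : ℕ} (hj : 0 < j) (hjp : j < p - 1) :
    p ∣ esymmA (p - 1) j := by
  have hS (i : ℕ) (hi : 0 < i) (hij : i ≤ j) : (powerSumA (p - 1) i : ZMod p) = 0 :=
    (ZMod.natCast_eq_zero_iff _ _).2 (prime_dvd_powerSumA hi (by omega))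
  have hnewton := powerSumA_eq_mul_esymmA_sub_sum (R := ZMod p) (p - 1) hj
  rw [hS j hj le_rfl, sum_eq_zero fun a ha => ?_, sub_zero, eq_comm] at hnewton
  · have hj0 : (j : ZMod p) ≠ 0 := by
      rw [Ne, ZMod.natCast_eq_zero_iff]
      exact Nat.not_dvd_of_pos_of_lt hj (by omega)
    rw [← ZMod.natCast_eq_zero_iff]
    simpa [hj0] using hnewton
  · simp only [mem_filter, HasAntidiagonal.mem_antidiagonal, Set.mem_Ioo] at ha
    rw [hS a.2 (by omega) (by omega), mul_zero]

theorem sq_dvd_mul_esymmA_sub_powerSumA {k : ℕ} (hk : 0 < k) (hkp : k < p) :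
    (p : ℤ) ^ 2 ∣ k * esymmA (p - 1) k - (-1) ^ (k - 1) * powerSumA (p - 1) k := by
  have hsign : (-1 : ℤ) ^ (k + 1) = (-1) ^ (k - 1) := by
    rw [show k + 1 = k - 1 + 2 by omega, pow_add, neg_one_sq, mul_one]
  have hsq : ((-1 : ℤ) ^ (k - 1)) ^ 2 = 1 := by
    rw [← pow_mul, mul_comm, pow_mul, neg_one_sq, one_pow]
  have hnewton := powerSumA_eq_mul_esymmA_sub_sum (R := ℤ) (p - 1) hk
  rw [hsign] at hnewton
  have hdiff : (k * esymmA (p - 1) k - (-1) ^ (k - 1) * powerSumA (p - 1) k : ℤ) =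
      (-1) ^ (k - 1) * ∑ a ∈ antidiagonal k with a.1 ∈ Set.Ioo 0 k,
        (-1) ^ a.1 * esymmA (p - 1) a.1 * (powerSumA (p - 1) a.2 : ℤ) := by
    rw [hnewton]
    linear_combination (-(k * esymmA (p - 1) k : ℤ)) * hsq
  rw [hdiff]
  refine Dvd.dvd.mul_left (dvd_sum fun a ha => ?_) _
  simp only [mem_filter, HasAntidiagonal.mem_antidiagonal, Set.mem_Ioo] at ha
  have hA : (p : ℤ) ∣ esymmA (p - 1) a.1 :=
    Int.natCast_dvd_natCast.2 (prime_dvd_esymmA (by omega) (by omega))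
  have hS : (p : ℤ) ∣ powerSumA (p - 1) a.2 :=
    Int.natCast_dvd_natCast.2 (prime_dvd_powerSumA (by omega) (by omega))
  rw [mul_assoc, sq]
  exact (mul_dvd_mul hA hS).mul_left _

theorem Padic.exists_eq_div_add_of_dvd {k : ℕ} (hk : ¬p ∣ k) {a b : ℤ} {n : ℕ}
    (h : (p : ℤ) ^ n ∣ k * a - b) : ∃ z : ℤ_[p], (a : ℚ_[p]) = b / k + p ^ n * z := by
  obtain ⟨m, hm⟩ := h
  have hk1 : ‖(k : ℚ_[p])‖ = 1 :=
    Padic.norm_natCast_eq_one_iff.2 ((Nat.Prime.coprime_iff_not_dvd Fact.out).2 hk)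
  have hk0 : (k : ℚ_[p]) ≠ 0 := norm_ne_zero_iff.1 (by simp [hk1])
  refine ⟨⟨m / k, by rw [norm_div, hk1, div_one]; exact Padic.norm_int_le_one m⟩, ?_⟩
  change _ = _ + _ * ((m : ℚ_[p]) / k)
  field_simp
  have hm' := congrArg (Int.cast : ℤ → ℚ_[p]) hm
  push_cast at hm'
  linear_combination hm'

end

theorem stmt_12_general (p k : ℕ) [hp : Fact p.Prime]
    (hk1 : 1 ≤ k) (hk2 : k ≤ p - 1) :
    ∃ z : ℤ_[p], (esymmA (p - 1) k : ℚ_[p]) =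
      ((-1 : ℚ_[p]) ^ (k - 1) / (k : ℚ_[p])) *
        (∑ l ∈ Finset.Icc 1 (p - 1), (l : ℚ_[p]) ^ k)
      + (p : ℚ_[p]) ^ 2 * z := by
  have hkp : k < p := by have := hp.out.two_le; omega
  obtain ⟨z, hz⟩ := Padic.exists_eq_div_add_of_dvd (Nat.not_dvd_of_pos_of_lt hk1 hkp)
    (sq_dvd_mul_esymmA_sub_powerSumA hk1 hkp)
  refine ⟨z, ?_⟩
  push_cast [powerSumA] at hz
  rw [hz, div_mul_eq_mul_div]

theorem stmt_12 (p k : ℕ) [hp : Fact p.Prime] (hodd : Odd p)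
    (hk1 : 1 ≤ k) (hk2 : k ≤ p - 1) :
    ∃ z : ℤ_[p], (esymmA (p - 1) k : ℚ_[p]) =
      ((-1 : ℚ_[p]) ^ (k - 1) / (k : ℚ_[p])) *
        (∑ l ∈ Finset.Icc 1 (p - 1), (l : ℚ_[p]) ^ k)
      + (p : ℚ_[p]) ^ 2 * z :=
  stmt_12_general p k (hp := hp) hk1 hk2
end

section
/- For every odd prime p and every odd n with 3 ≤ 2n+1 ≤ p-4 (n ≥ 1), p² divides the unsigned Stirling number of the first kind [p, 2n+2]. -/
open Polynomial Finset

section Aux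
variable {R : Type*} [CommRing R] {ι : Type*} [DecidableEq ι]

lemma my_prod_sub_C (c : R) (hc : c * c = 0) (s : Finset ι) (f : ι → R[X]) :
    ∏ i ∈ s, (f i - C c) = ∏ i ∈ s, f i - C c * ∑ i ∈ s, ∏ j ∈ s.erase i, f j := by
  induction s using Finset.induction_on with
  | empty => simp
  | @insert a s ha ih =>
    rw [Finset.prod_insert ha, Finset.prod_insert ha, ih, Finset.sum_insert ha,
      Finset.erase_insert ha]
    have h2 : ∀ i ∈ s, ∏ j ∈ (insert a s).erase i, f j = f a * ∏ j ∈ s.erase i, f j := by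
      intro i hi
      rw [Finset.erase_insert_of_ne (by rintro rfl; exact ha hi),
        Finset.prod_insert (fun h => ha (Finset.mem_of_mem_erase h))]
    rw [Finset.sum_congr rfl h2, ← Finset.mul_sum]
    have hcc : C c * C c = 0 := by rw [← C_mul, hc, C_0]
    ring_nf
    rw [show (C c)^2 = C c * C c by ring, hcc]
    ring

omit [DecidableEq ι] in
lemma my_coeff_prod_C_sub_X (s : Finset ι) (r : ι → R) (k : ℕ) (h : k ≤ s.card) :
    (∏ i ∈ s, (C (r i) - X)).coeff k = (-1) ^ k * (∏ i ∈ s, (X + C (r i))).coeff k := by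
  have h1 : ∀ i ∈ s, C (r i) - X = -1 * (X + C (-r i)) := by
    intro i _; rw [map_neg]; ring
  rw [Finset.prod_congr rfl h1, Finset.prod_mul_distrib, Finset.prod_const,
    show ((-1 : R[X]) ^ s.card) = C ((-1)^s.card) by simp, coeff_C_mul,
    Finset.prod_X_add_C_coeff s _ h, Finset.prod_X_add_C_coeff s r h]
  rw [Finset.mul_sum, Finset.mul_sum]
  apply Finset.sum_congr rfl
  intro t ht
  have htc : t.card = s.card - k := (Finset.mem_powersetCard.mp ht).2
  have h3 : ∀ i ∈ t, -r i = -1 * r i := fun i _ => by ring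
  rw [Finset.prod_congr rfl h3, Finset.prod_mul_distrib, Finset.prod_const, htc, ← mul_assoc,
    ← pow_add, show s.card + (s.card - k) = 2 * (s.card - k) + k by omega,
    pow_add, pow_mul, neg_one_sq, one_pow, one_mul]

lemma my_derivative_prod_X_add_C (s : Finset ι) (r : ι → R) :
    derivative (∏ i ∈ s, (X + C (r i))) = ∑ i ∈ s, ∏ j ∈ s.erase i, (X + C (r j)) := by
  induction s using Finset.induction_on with
  | empty => simp
  | @insert a s ha ih =>
    rw [Finset.prod_insert ha, derivative_mul, ih, Finset.sum_insert ha,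
      Finset.erase_insert ha]
    have h2 : ∀ i ∈ s, ∏ j ∈ (insert a s).erase i, (X + C (r j))
        = (X + C (r a)) * ∏ j ∈ s.erase i, (X + C (r j)) := by
      intro i hi
      rw [Finset.erase_insert_of_ne (by rintro rfl; exact ha hi),
        Finset.prod_insert (fun h => ha (Finset.mem_of_mem_erase h))]
    rw [Finset.sum_congr rfl h2, ← Finset.mul_sum]
    simp

end Aux

lemma my_prod_range (p : ℕ) (hp : p.Prime) :
    (∏ i ∈ Finset.range p, (X + C (i : ZMod p))) = X ^ p - X := by
  haveI := Fact.mk hp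
  have hcard : Fintype.card (ZMod p) = p := ZMod.card p
  have hinj : ∀ a ∈ Finset.range p, ∀ b ∈ Finset.range p,
      (a : ZMod p) = (b : ZMod p) → a = b := by
    intro a ha b hb hab
    have := congrArg ZMod.val hab
    rwa [ZMod.val_cast_of_lt (Finset.mem_range.mp ha),
      ZMod.val_cast_of_lt (Finset.mem_range.mp hb)] at this
  have himg : (Finset.range p).image (Nat.cast : ℕ → ZMod p) = Finset.univ := by
    apply Finset.eq_univ_of_card
    rw [Finset.card_image_of_injOn (fun a ha b hb => hinj a ha b hb), Finset.card_range, hcard]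
  rw [← Finset.prod_image (f := fun a => X + C a) hinj, himg]
  have hneg : (∏ a : ZMod p, (X + C a)) = ∏ a : ZMod p, (X - C a) := by
    apply Fintype.prod_bijective Neg.neg neg_involutive.bijective
    intro a; rw [map_neg]; ring
  rw [hneg]
  have h1p : 1 < p := hp.one_lt
  have hmon : (X ^ p - X : (ZMod p)[X]).Monic :=
    Polynomial.monic_X_pow_sub (by rw [Polynomial.degree_X]; exact_mod_cast h1p)
  have hroots := FiniteField.roots_X_pow_card_sub_X (ZMod p)
  rw [hcard] at hroots
  have hdeg : (X ^ p - X : (ZMod p)[X]).natDegree = p :=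
    FiniteField.X_pow_card_sub_X_natDegree_eq _ h1p
  have := Polynomial.C_leadingCoeff_mul_prod_multiset_X_sub_C
    (p := (X ^ p - X : (ZMod p)[X])) (by rw [hroots, hdeg]; simp [hcard])
  rw [hmon.leadingCoeff, C_1, one_mul, hroots] at this
  rw [← this]
  rfl

/-- The unsigned Stirling number of the first kind `[n, k]`: the coefficient of `x^k`
in the rising factorial `x(x+1)⋯(x+n-1)`. -/
noncomputable def stirling1 (n k : ℕ) : ℕ :=
  (∏ i ∈ Finset.range n, (Polynomial.X + Polynomial.C i) : Polynomial ℕ).coeff k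

theorem stmt_15 (p n : ℕ) (hp : p.Prime) (hodd : Odd p)
    (hn : 1 ≤ n) (hn2 : 2 * n + 1 ≤ p - 4) :
    p ^ 2 ∣ stirling1 p (2 * n + 2) := by
  have hp7 : 7 ≤ p := by
    have h2 := hp.two_le
    omega
  set q := p - 1 with hqdef
  have hq : p = q + 1 := by omega
  have hqeven : Even q := by
    obtain ⟨c, hc⟩ := hodd; exact ⟨c, by omega⟩
  set m := 2 * n + 1 with hmdef
  set Gnat : Polynomial ℕ := ∏ i ∈ Finset.range q, (X + C (i + 1)) with hGnatdef
  -- stirling in terms of Gnat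
  have hstir : ∀ k : ℕ, stirling1 p (k + 1) = Gnat.coeff k := by
    intro k
    show (∏ i ∈ Finset.range p, (X + C i) : Polynomial ℕ).coeff (k + 1) = _
    rw [hq, Finset.prod_range_succ']
    simp only [Nat.cast_zero, C_0, add_zero, map_zero]
    rw [Polynomial.coeff_mul_X]
  -- mod p: p ∣ Gnat.coeff (m+1)
  have hdvd1 : p ∣ Gnat.coeff (m + 1) := by
    rw [← ZMod.natCast_eq_zero_iff]
    have hmap : Gnat.map (Nat.castRingHom (ZMod p))
        = ∏ i ∈ Finset.range q, (X + C ((i : ZMod p) + 1)) := by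
      rw [Polynomial.map_prod]
      refine Finset.prod_congr rfl fun i _ => ?_
      rw [Polynomial.map_add, Polynomial.map_X, Polynomial.map_C]
      push_cast
      ring_nf
    have h1 : ((Gnat.coeff (m + 1) : ℕ) : ZMod p)
        = (∏ i ∈ Finset.range q, (X + C ((i : ZMod p) + 1))).coeff (m + 1) := by
      rw [← hmap, Polynomial.coeff_map]; rfl
    rw [h1]
    have h2 : X * (∏ i ∈ Finset.range q, (X + C ((i : ZMod p) + 1)))
        = ∏ i ∈ Finset.range p, (X + C (i : ZMod p)) := by
      rw [hq, Finset.prod_range_succ']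
      simp only [Nat.cast_zero, C_0, add_zero, Nat.cast_add, Nat.cast_one]
      ring
    have h4 : (∏ i ∈ Finset.range p, (X + C (i : ZMod p))).coeff (m + 1 + 1) = 0 := by
      rw [my_prod_range p hp, Polynomial.coeff_sub, Polynomial.coeff_X_pow,
        Polynomial.coeff_X]
      rw [if_neg (by omega), if_neg (by omega)]
      ring
    rw [← Polynomial.coeff_X_mul, h2, h4]
  obtain ⟨t, ht⟩ := hdvd1
  -- mod p²
  have hp2 : ((p : ZMod (p ^ 2)) * (p : ZMod (p ^ 2))) = 0 := by
    rw [← Nat.cast_mul, ← pow_two, ZMod.natCast_self]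
  set f : ℕ → (ZMod (p ^ 2))[X] := fun i => X + C ((i : ZMod (p ^ 2)) + 1) with hfdef
  set F : (ZMod (p ^ 2))[X] := ∏ i ∈ Finset.range q, f i with hFdef
  have hcast : ∀ k : ℕ, ((Gnat.coeff k : ℕ) : ZMod (p ^ 2)) = F.coeff k := by
    intro k
    have hmap : Gnat.map (Nat.castRingHom (ZMod (p ^ 2))) = F := by
      rw [hFdef, Polynomial.map_prod]
      refine Finset.prod_congr rfl fun i _ => ?_
      rw [Polynomial.map_add, Polynomial.map_X, Polynomial.map_C, hfdef]
      push_cast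
      ring_nf
    rw [← hmap, Polynomial.coeff_map]; rfl
  -- the reflection/shift identity
  have hFneg : (∏ i ∈ Finset.range q, (C ((i : ZMod (p ^ 2)) + 1) - X))
      = F - C (p : ZMod (p ^ 2)) * ∑ i ∈ Finset.range q, ∏ j ∈ (Finset.range q).erase i, f j := by
    have hre := (Finset.prod_range_reflect (fun i => (C ((i : ZMod (p ^ 2)) + 1) - X)) q).symm
    rw [hre]
    have hterm : ∀ i ∈ Finset.range q,
        (C (((q - 1 - i : ℕ) : ZMod (p ^ 2)) + 1) - X) = -1 * (f i - C (p : ZMod (p ^ 2))) := by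
      intro i hi
      have hi' : i < q := Finset.mem_range.mp hi
      have hv : (((q - 1 - i : ℕ) : ZMod (p ^ 2)) + 1)
          = (p : ZMod (p ^ 2)) - ((i : ZMod (p ^ 2)) + 1) := by
        have h1 : q - 1 - i = p - (i + 2) := by omega
        rw [h1, Nat.cast_sub (by omega)]
        push_cast
        ring
      rw [hv, hfdef]
      simp only [map_sub]
      ring
    rw [Finset.prod_congr rfl hterm, Finset.prod_mul_distrib, Finset.prod_const,
      Finset.card_range, hqeven.neg_one_pow, one_mul, my_prod_sub_C _ hp2]
  -- take coefficient m
  have hmcard : m ≤ (Finset.range q).card := by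
    rw [Finset.card_range]; omega
  have hlhs : (∏ i ∈ Finset.range q, (C ((i : ZMod (p ^ 2)) + 1) - X)).coeff m
      = - F.coeff m := by
    rw [my_coeff_prod_C_sub_X _ _ m hmcard, Odd.neg_one_pow ⟨n, by omega⟩, neg_one_mul]
  have hsum : (∑ i ∈ Finset.range q, ∏ j ∈ (Finset.range q).erase i, f j) = derivative F := by
    rw [hFdef, hfdef, my_derivative_prod_X_add_C]
  have hkey := congrArg (fun P => P.coeff m) hFneg
  rw [hlhs, hsum, Polynomial.coeff_sub, Polynomial.coeff_C_mul,
    Polynomial.coeff_derivative] at hkey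
  -- F.coeff (m+1) is p * t
  have hFm1 : (p : ZMod (p ^ 2)) * F.coeff (m + 1) = 0 := by
    rw [← hcast (m + 1), ht]
    push_cast
    rw [← mul_assoc, hp2, zero_mul]
  have hzero : (2 : ZMod (p ^ 2)) * F.coeff m = 0 := by
    have : (p : ZMod (p ^ 2)) * (F.coeff (m + 1) * ((m : ZMod (p ^ 2)) + 1)) = 0 := by
      rw [← mul_assoc, hFm1, zero_mul]
    rw [this] at hkey
    linear_combination -hkey
  -- conclude
  have hdvd2 : p ^ 2 ∣ 2 * Gnat.coeff m := by
    rw [← ZMod.natCast_eq_zero_iff]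
    push_cast
    rw [hcast m]
    exact hzero
  have hcop : (p ^ 2).Coprime 2 := by
    apply Nat.Coprime.pow_left
    rw [hp.coprime_iff_not_dvd]
    intro h
    have := Nat.le_of_dvd (by norm_num) h
    omega
  have := Nat.Coprime.dvd_of_dvd_mul_left hcop hdvd2
  have hfinal : stirling1 p (2 * n + 2) = Gnat.coeff m := by
    rw [show 2 * n + 2 = m + 1 by omega, hstir]
  rw [hfinal]
  exact this
end

section
/- (Glaisher) For every prime p ≥ 7 and every odd r with 3 ≤ r ≤ p-2, the elementary symmetric polynomial A_r of 1,...,p-1 satisfies A_r ≡ (p(p-r)/2)·A_{r-1} mod p³. -/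
/-!
Since `i ↦ p - i` permutes `{1, …, p - 1}`, `A_k = ∑_{|t| = k} ∏_{i ∈ t} (p - i)`.
Expanding the products and counting how often each subset occurs gives
`A_k = ∑_j (-1)^(k-j) p^j C(p-1-k+j, j) A_(k-j)`.
Modulo `p` this reads `A_k ≡ (-1)^k A_k`, so `p ∣ A_k` for odd `k`. For odd `r` the terms
`j = 0, 1` are `-A_r` and `p (p - r) A_(r-1)`, the term `j = 2` contains `p² A_(r-2)` with
`p ∣ A_(r-2)`, and all later terms contain `p³`.
-/

open Finset

theorem Finset.sum_powersetCard_sum_powersetCard_sdiff {α M : Type*} [DecidableEq α]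
    [AddCommMonoid M] (S : Finset α) (m j : ℕ) (g : Finset α → M) :
    ∑ t ∈ S.powersetCard (m + j), ∑ s ∈ t.powersetCard j, g (t \ s) =
      (#S - m).choose j • ∑ u ∈ S.powersetCard m, g u := by
  rw [sum_sigma', smul_sum]
  calc _ = ∑ x ∈ (S.powersetCard m).sigma fun u => (S \ u).powersetCard j, g x.1 := by
        refine sum_nbij' (fun x => ⟨x.1 \ x.2, x.2⟩) (fun x => ⟨x.1 ∪ x.2, x.2⟩)
          ?_ ?_ ?_ ?_ fun _ _ => rfl
        · rintro ⟨t, s⟩ h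
          simp only [mem_sigma, mem_powersetCard] at h ⊢
          obtain ⟨⟨htS, ht⟩, hst, hs⟩ := h
          refine ⟨⟨sdiff_subset.trans htS, by rw [card_sdiff_of_subset hst]; omega⟩, ?_, hs⟩
          exact subset_sdiff.2 ⟨hst.trans htS, disjoint_sdiff⟩
        · rintro ⟨u, s⟩ h
          simp only [mem_sigma, mem_powersetCard, subset_sdiff] at h ⊢
          obtain ⟨⟨huS, hu⟩, ⟨hsS, hsu⟩, hs⟩ := h
          exact ⟨⟨union_subset huS hsS, by rw [card_union_of_disjoint hsu.symm]; omega⟩,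
            subset_union_right, hs⟩
        · rintro ⟨t, s⟩ h
          simp only [mem_sigma, mem_powersetCard] at h
          simp [sdiff_union_of_subset h.2.1]
        · rintro ⟨u, s⟩ h
          simp only [mem_sigma, mem_powersetCard, subset_sdiff] at h
          simp [union_sdiff_cancel_right h.2.1.2.symm]
    _ = _ := by
        rw [sum_sigma]
        refine sum_congr rfl fun u hu => ?_
        rw [mem_powersetCard] at hu
        simp only [sum_const, card_powersetCard, card_sdiff_of_subset hu.1, hu.2]

theorem Finset.sum_powersetCard_prod_sub {α R : Type*} [DecidableEq α] [CommRing R]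
    (S : Finset α) (c : R) (f : α → R) (k : ℕ) :
    ∑ t ∈ S.powersetCard k, ∏ i ∈ t, (c - f i) =
      ∑ j ∈ range (k + 1), (-1) ^ (k - j) * c ^ j * (#S - (k - j)).choose j *
        ∑ u ∈ S.powersetCard (k - j), ∏ i ∈ u, f i := by
  have hexpand : ∀ t ∈ S.powersetCard k, ∏ i ∈ t, (c - f i) =
      ∑ j ∈ range (k + 1), ∑ s ∈ t.powersetCard j,
        (-1) ^ (k - j) * c ^ j * ∏ i ∈ t \ s, f i := by
    intro t ht
    rw [mem_powersetCard] at ht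
    simp_rw [sub_eq_add_neg]
    rw [prod_add, sum_powerset, ht.2]
    refine sum_congr rfl fun j _ => sum_congr rfl fun s hs => ?_
    rw [mem_powersetCard] at hs
    rw [prod_const, prod_neg, card_sdiff_of_subset hs.1, ht.2, hs.2]
    ring
  rw [sum_congr rfl hexpand, sum_comm]
  refine sum_congr rfl fun j hj => ?_
  have hcount := S.sum_powersetCard_sum_powersetCard_sdiff (k - j) j fun u => ∏ i ∈ u, f i
  rw [Nat.sub_add_cancel (Nat.le_of_lt_succ (mem_range.1 hj))] at hcount
  simp_rw [← mul_sum]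
  rw [hcount, nsmul_eq_mul]
  ring

theorem esymmA_eq_sum_prod_sub (p k : ℕ) :
    (esymmA (p - 1) k : ℤ) =
      ∑ t ∈ (Icc 1 (p - 1)).powersetCard k, ∏ i ∈ t, ((p : ℤ) - i) := by
  have hreflect : (Icc 1 (p - 1)).val.map (p - ·) = (Icc 1 (p - 1)).val := by
    rw [← image_val_of_injOn]
    · congr 1
      ext i
      simp only [mem_image, mem_Icc]
      exact ⟨by omega, fun hi => ⟨p - i, by omega, by omega⟩⟩
    · intro i hi j hj hij
      simp only [coe_Icc, Set.mem_Icc] at hi hj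
      simp only at hij
      omega
  push_cast [esymmA]
  rw [← esymm_map_val, ← esymm_map_val]
  conv_lhs => rw [← hreflect, Multiset.map_map]
  congr 1
  refine Multiset.map_congr rfl fun i hi => ?_
  rw [Finset.mem_val, mem_Icc] at hi
  simp [Nat.cast_sub (by omega : i ≤ p)]

theorem esymmA_eq_sum_choose_mul_esymmA (p k : ℕ) :
    (esymmA (p - 1) k : ℤ) = ∑ j ∈ range (k + 1),
      (-1) ^ (k - j) * (p : ℤ) ^ j * (p - 1 - (k - j)).choose j * esymmA (p - 1) (k - j) := by
  rw [esymmA_eq_sum_prod_sub, sum_powersetCard_prod_sub, Nat.card_Icc, Nat.add_sub_cancel]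
  push_cast [esymmA]
  rfl

theorem prime_dvd_esymmA_of_odd {p k : ℕ} (hp : p.Prime) (hp2 : p ≠ 2) (hk : Odd k) :
    (p : ℤ) ∣ esymmA (p - 1) k := by
  have h := esymmA_eq_sum_choose_mul_esymmA p k
  rw [sum_range_succ', Nat.sub_zero, hk.neg_one_pow] at h
  have htail : (p : ℤ) ∣ ∑ j ∈ range k,
      (-1) ^ (k - (j + 1)) * (p : ℤ) ^ (j + 1) * (p - 1 - (k - (j + 1))).choose (j + 1) *
        esymmA (p - 1) (k - (j + 1)) :=
    dvd_sum fun j _ => by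
      apply Dvd.dvd.mul_right; apply Dvd.dvd.mul_right
      exact (dvd_pow_self _ j.succ_ne_zero).mul_left _
  have h2 : (p : ℤ) ∣ 2 * esymmA (p - 1) k := by
    convert htail using 1
    simp only [pow_zero, mul_one, Nat.choose_zero_right, Nat.cast_one] at h
    linear_combination h
  refine ((Nat.prime_iff_prime_int.mp hp).dvd_or_dvd h2).resolve_left fun h2p => hp2 ?_
  have := Nat.le_of_dvd two_pos (Int.natCast_dvd_natCast.mp h2p)
  have := hp.two_le
  omega

theorem prime_pow_three_dvd_two_mul_esymmA_sub {p r : ℕ} (hp : p.Prime) (hp2 : p ≠ 2)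
    (hr : Odd r) (hr3 : 3 ≤ r) (hrp : r ≤ p) :
    (p : ℤ) ^ 3 ∣ 2 * esymmA (p - 1) r - p * (p - r) * esymmA (p - 1) (r - 1) := by
  set F : ℕ → ℤ := fun j =>
    (-1) ^ (r - j) * (p : ℤ) ^ j * (p - 1 - (r - j)).choose j * esymmA (p - 1) (r - j) with hF
  have h : (esymmA (p - 1) r : ℤ) = ∑ j ∈ range (r - 2), F (j + 3) + F 2 + F 1 + F 0 := by
    rw [esymmA_eq_sum_choose_mul_esymmA, show r + 1 = r - 2 + 1 + 1 + 1 by omega,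
      sum_range_succ', sum_range_succ', sum_range_succ']
  have hF0 : F 0 = -esymmA (p - 1) r := by
    simp [hF, hr.neg_one_pow]
  have hF1 : F 1 = p * (p - r) * esymmA (p - 1) (r - 1) := by
    have : p - 1 - (r - 1) = p - r := by omega
    simp [hF, (Nat.Odd.sub_odd hr odd_one).neg_one_pow, this, Nat.cast_sub hrp]
  have hF2 : (p : ℤ) ^ 3 ∣ F 2 := by
    obtain ⟨c, hc⟩ := prime_dvd_esymmA_of_odd hp hp2 (Nat.Odd.sub_even (by omega) hr even_two)
    exact ⟨(-1) ^ (r - 2) * (p - 1 - (r - 2)).choose 2 * c, by rw [hF]; simp only [hc]; ring⟩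
  have htail : (p : ℤ) ^ 3 ∣ ∑ j ∈ range (r - 2), F (j + 3) :=
    dvd_sum fun j _ => by
      apply Dvd.dvd.mul_right; apply Dvd.dvd.mul_right
      exact (pow_dvd_pow _ (by omega)).mul_left _
  have hdiff : 2 * (esymmA (p - 1) r : ℤ) - p * (p - r) * esymmA (p - 1) (r - 1) =
      ∑ j ∈ range (r - 2), F (j + 3) + F 2 := by
    rw [hF0, hF1] at h
    linear_combination h
  exact hdiff ▸ htail.add hF2

theorem stmt_17 (p r : ℕ) [hp : Fact p.Prime] (hp7 : 7 ≤ p)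
    (hrodd : Odd r) (hr1 : 3 ≤ r) (hr2 : r ≤ p - 2) :
    ∃ z : ℤ_[p], (esymmA (p - 1) r : ℚ_[p]) =
      ((p : ℚ_[p]) * ((p : ℚ_[p]) - (r : ℚ_[p])) / 2) * (esymmA (p - 1) (r - 1) : ℚ_[p])
      + (p : ℚ_[p]) ^ 3 * z := by
  have hp2 : p ≠ 2 := by omega
  obtain ⟨c, hc⟩ := prime_pow_three_dvd_two_mul_esymmA_sub hp.out hp2 hrodd hr1 (by omega)
  have htwo : IsUnit (2 : ℤ_[p]) := PadicInt.isUnit_iff.2 <| by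
    exact_mod_cast PadicInt.norm_natCast_eq_one_iff.2
      ((Nat.coprime_primes hp.out Nat.prime_two).2 hp2)
  obtain ⟨z, hz⟩ := htwo.dvd (a := (c : ℤ_[p]))
  refine ⟨z, ?_⟩
  have hcz : (c : ℚ_[p]) = 2 * z := by exact_mod_cast congrArg ((↑) : ℤ_[p] → ℚ_[p]) hz
  have hcQ := congrArg (Int.cast : ℤ → ℚ_[p]) hc
  push_cast at hcQ
  linear_combination hcQ / 2 + (p : ℚ_[p]) ^ 3 * hcz / 2
end

section
/- (Glaisher/Sun) For every prime p ≥ 7 and every even m with 2 ≤ m ≤ p-3, ∑_{k=1}^{p-1} 1/k^m ≡ (m/(m+1))·p·B_{p-1-m} mod p², where B denotes Bernoulli numbers. -/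
/-!
Write `S_n = ∑_{k<p} k^n`, `a = p - 1 - m` and `A = p(p-1) - m`. By Euler, `1/k^m ≡ k^A (mod p²)`,
so the harmonic sum is `S_A` modulo `p²`; by Faulhaber's formula `S_a ≡ p B_a (mod p²)`, which
needs only that `p B_i` is `p`-integral for `i < p - 1` (by induction from the same formula) and
that `B_{a-1}` is, its index being odd.
The two power sums are tied by Voronoi's trick: multiplication by a unit `g` permutes the residues,
and expanding `(kg - p⌊kg/p⌋)^n` to second order gives
`(g^n - 1) S_n ≡ n p g^{n-1} ∑ k^{n-1} ⌊kg/p⌋ (mod p²)`, whose right side modulo `p²` depends on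
`n` only through `n mod p` and `n mod (p-1)`. Choosing `g` with `g^a ≢ 1 (mod p)` and using
`A ≡ -m`, `a ≡ -(m+1) (mod p)` gives `(m+1) S_A ≡ m S_a (mod p²)`.
-/

open Finset

namespace Glaisher

def powerSum (p n : ℕ) : ℤ := ∑ k ∈ range p, (k : ℤ) ^ n

def voronoiSum (p g n : ℕ) : ℤ := ∑ k ∈ range p, (k : ℤ) ^ (n - 1) * (k * g / p : ℕ)

theorem sum_range_mul_mod {M : Type*} [AddCommMonoid M] {p g : ℕ} (hg : p.Coprime g)
    (f : ℕ → M) : ∑ k ∈ range p, f (k * g % p) = ∑ k ∈ range p, f k := by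
  have hmaps : Set.MapsTo (fun k ↦ k * g % p) (range p : Set ℕ) (range p) := fun k hk ↦
    mem_range.2 (Nat.mod_lt _ (pos_of_ne_zero (by rintro rfl; simp at hk)))
  have hinj : Set.InjOn (fun k ↦ k * g % p) (range p) := fun k hk l hl h ↦ by
    have h' : k ≡ l [MOD p] := Nat.ModEq.cancel_right_of_coprime hg.gcd_eq_one h
    rwa [Nat.ModEq, Nat.mod_eq_of_lt (mem_range.1 hk), Nat.mod_eq_of_lt (mem_range.1 hl)] at h'
  exact sum_nbij _ hmaps hinj (surjOn_of_injOn_of_card_le _ hmaps hinj le_rfl) fun _ _ ↦ rfl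

theorem pow_sub_one_mul_powerSum_modEq {p g : ℕ} (hg : p.Coprime g) (n : ℕ) :
    ((g : ℤ) ^ n - 1) * powerSum p n ≡ n * p * g ^ (n - 1) * voronoiSum p g n [ZMOD p ^ 2] := by
  have hterm (k : ℕ) : ((k * g % p : ℕ) : ℤ) ^ n ≡ ((k : ℤ) * g) ^ n -
      n * p * g ^ (n - 1) * ((k : ℤ) ^ (n - 1) * (k * g / p : ℕ)) [ZMOD p ^ 2] := by
    have hdiv : ((k * g % p : ℕ) : ℤ) = k * g + -(p * (k * g / p : ℕ)) := by
      have := Nat.mod_add_div (k * g) p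
      zify at this ⊢
      linarith
    have hsq : (p : ℤ) ^ 2 ∣ (-(p * (k * g / p : ℕ) : ℤ)) ^ 2 := ⟨(k * g / p : ℕ) ^ 2, by ring⟩
    refine Int.modEq_iff_dvd.2 <|
      (hsq.trans (sq_dvd_add_pow_sub_sub _ ((k : ℤ) * g) n)).neg_right.trans (dvd_of_eq ?_)
    rw [hdiv]
    ring
  have hsum := Int.ModEq.sum (s := range p) fun k _ ↦ hterm k
  rw [sum_range_mul_mod hg (fun r ↦ (r : ℤ) ^ n)] at hsum
  refine Int.modEq_iff_dvd.2 <| (Int.modEq_iff_dvd.1 hsum).neg_right.trans (dvd_of_eq ?_)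
  simp only [powerSum, voronoiSum, mul_sum, ← sum_sub_distrib, ← sum_neg_distrib]
  exact sum_congr rfl fun k _ ↦ by ring

theorem pow_add_mul_modEq {p : ℕ} (hp : p.Prime) (x : ℤ) {n : ℕ} (hn : n ≠ 0) (j : ℕ) :
    x ^ (n + (p - 1) * j) ≡ x ^ n [ZMOD p] := by
  have := Fact.mk hp
  rw [← ZMod.intCast_eq_intCast_iff]
  push_cast
  rcases eq_or_ne (x : ZMod p) 0 with hx | hx
  · simp [hx, hn]
  · rw [pow_add, pow_mul, ZMod.pow_card_sub_one_eq_one hx, one_pow, mul_one]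

theorem exists_coprime_not_dvd_pow_sub_one {p : ℕ} (hp : p.Prime) {n : ℕ} (hn : ¬(p - 1) ∣ n) :
    ∃ g : ℕ, p.Coprime g ∧ ¬(p : ℤ) ∣ (g : ℤ) ^ n - 1 := by
  have := Fact.mk hp
  obtain ⟨x, hx⟩ : ∃ x : (ZMod p)ˣ, x ^ n ≠ 1 := by
    by_contra! h
    exact hn (by simpa using (FiniteField.forall_pow_eq_one_iff (ZMod p) n).1 h)
  refine ⟨(x : ZMod p).val, hp.coprime_iff_not_dvd.2 fun h ↦ x.ne_zero ?_, fun h ↦ hx ?_⟩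
  · rwa [← ZMod.natCast_eq_zero_iff, ZMod.natCast_zmod_val] at h
  · rw [← ZMod.intCast_zmod_eq_zero_iff_dvd] at h
    push_cast at h
    rw [ZMod.natCast_zmod_val, sub_eq_zero] at h
    exact Units.val_eq_one.1 (by simpa using h)

theorem prime_dvd_powerSum {p : ℕ} (hp : p.Prime) {n : ℕ} (hn : ¬(p - 1) ∣ n) :
    (p : ℤ) ∣ powerSum p n := by
  obtain ⟨g, hg, hgn⟩ := exists_coprime_not_dvd_pow_sub_one hp hn
  have h := (pow_sub_one_mul_powerSum_modEq hg n).of_dvd (dvd_pow_self (p : ℤ) two_ne_zero)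
  have hdvd : (p : ℤ) ∣ ((g : ℤ) ^ n - 1) * powerSum p n :=
    h.dvd_iff.2 ⟨n * g ^ (n - 1) * voronoiSum p g n, by ring⟩
  exact ((Nat.prime_iff_prime_int.1 hp).dvd_or_dvd hdvd).resolve_left hgn

theorem mul_modEq_mul_sq {n x y s : ℤ} (h : x ≡ y [ZMOD n]) (hs : n ∣ s) :
    x * s ≡ y * s [ZMOD n ^ 2] := by
  obtain ⟨t, rfl⟩ := hs
  rw [sq, mul_left_comm, mul_left_comm y]
  exact (h.mul_right t).mul_left'

theorem pow_sub_one_mul_powerSum_modEq_of_modEq {p g : ℕ} (hp : p.Prime) (hg : p.Coprime g)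
    {e j : ℕ} (he : 2 ≤ e) (hdvd : ¬(p - 1) ∣ e) {c : ℤ} (hc : c ≡ (e + (p - 1) * j : ℕ) [ZMOD p]) :
    ((g : ℤ) ^ e - 1) * powerSum p (e + (p - 1) * j) ≡
      c * (p * g ^ (e - 1) * voronoiSum p g e) [ZMOD p ^ 2] := by
  set E := e + (p - 1) * j
  have hE1 : E - 1 = (e - 1) + (p - 1) * j := by omega
  have hgE : (g : ℤ) ^ E ≡ g ^ e [ZMOD p] := pow_add_mul_modEq hp g (by omega) j
  have htE : (g : ℤ) ^ (E - 1) * voronoiSum p g E ≡ g ^ (e - 1) * voronoiSum p g e [ZMOD p] := by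
    rw [hE1]
    refine (pow_add_mul_modEq hp g (by omega) j).mul (Int.ModEq.sum fun k _ ↦ ?_)
    rw [hE1]
    exact (pow_add_mul_modEq hp k (by omega) j).mul_right _
  have hSE : (p : ℤ) ∣ powerSum p E :=
    prime_dvd_powerSum hp fun h ↦ hdvd ((Nat.dvd_add_left (dvd_mul_right _ _)).1 h)
  calc ((g : ℤ) ^ e - 1) * powerSum p E
      ≡ ((g : ℤ) ^ E - 1) * powerSum p E [ZMOD p ^ 2] :=
        mul_modEq_mul_sq (hgE.sub_right 1).symm hSE
    _ ≡ E * p * g ^ (E - 1) * voronoiSum p g E [ZMOD p ^ 2] := pow_sub_one_mul_powerSum_modEq hg E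
    _ = (E * ((g : ℤ) ^ (E - 1) * voronoiSum p g E)) * p := by ring
    _ ≡ (c * (g ^ (e - 1) * voronoiSum p g e)) * p [ZMOD p ^ 2] :=
        mul_modEq_mul_sq (hc.symm.mul htE) dvd_rfl
    _ = c * (p * g ^ (e - 1) * voronoiSum p g e) := by ring

theorem powerSum_kummer {p : ℕ} (hp : p.Prime) {e j : ℕ} (he : 2 ≤ e) (hdvd : ¬(p - 1) ∣ e)
    {c c' : ℤ} (hc : c ≡ (e + (p - 1) * j : ℕ) [ZMOD p]) (hc' : c' ≡ e [ZMOD p]) :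
    c' * powerSum p (e + (p - 1) * j) ≡ c * powerSum p e [ZMOD p ^ 2] := by
  obtain ⟨g, hg, hU⟩ := exists_coprime_not_dvd_pow_sub_one hp hdvd
  set U := (g : ℤ) ^ e - 1
  set X := (p : ℤ) * g ^ (e - 1) * voronoiSum p g e
  have hVE := pow_sub_one_mul_powerSum_modEq_of_modEq hp hg he hdvd hc
  have hVe : U * powerSum p e ≡ c' * X [ZMOD p ^ 2] := by
    simpa using pow_sub_one_mul_powerSum_modEq_of_modEq hp hg he hdvd (j := 0) (by simpa using hc')
  have hmul : U * (c' * powerSum p (e + (p - 1) * j)) ≡ U * (c * powerSum p e) [ZMOD p ^ 2] :=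
    calc U * (c' * powerSum p (e + (p - 1) * j))
        = c' * (U * powerSum p (e + (p - 1) * j)) := by ring
      _ ≡ c' * (c * X) [ZMOD p ^ 2] := hVE.mul_left c'
      _ = c * (c' * X) := by ring
      _ ≡ c * (U * powerSum p e) [ZMOD p ^ 2] := (hVe.mul_left c).symm
      _ = U * (c * powerSum p e) := by ring
  have hcop : IsCoprime ((p : ℤ) ^ 2) U :=
    (((Nat.prime_iff_prime_int.1 hp).coprime_iff_not_dvd).2 hU).pow_left
  simpa [Int.isCoprime_iff_gcd_eq_one.1 hcop] using
    Int.ModEq.cancel_left_div_gcd (pow_pos (mod_cast hp.pos) 2) hmul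

theorem succ_mul_powerSum_modEq {p m : ℕ} (hp : p.Prime) (hm : 1 ≤ m) (hmp : m + 3 ≤ p) :
    (m + 1) * powerSum p (p * (p - 1) - m) ≡ m * powerSum p (p - 1 - m) [ZMOD p ^ 2] := by
  have hsq : p * (p - 1) = (p - 1) * (p - 1) + (p - 1) := by
    nth_rewrite 1 [show p = p - 1 + 1 by omega]
    ring
  have hA : p * (p - 1) - m = p - 1 - m + (p - 1) * (p - 1) := by omega
  have hc : -(m : ℤ) ≡ (p - 1 - m + (p - 1) * (p - 1) : ℕ) [ZMOD p] := by
    refine Int.modEq_iff_dvd.2 ⟨(p - 1 : ℕ), ?_⟩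
    rw [← hA, sub_neg_eq_add]
    exact_mod_cast (show p * (p - 1) - m + m = p * (p - 1) by omega)
  have hc' : -((m : ℤ) + 1) ≡ (p - 1 - m : ℕ) [ZMOD p] := Int.modEq_iff_dvd.2 ⟨1, by omega⟩
  have hdvd : ¬(p - 1) ∣ p - 1 - m := fun h ↦ by have := Nat.le_of_dvd (by omega) h; omega
  rw [hA]
  convert (powerSum_kummer hp (by omega) hdvd hc hc').neg using 1 <;> ring

section Padic

variable {p : ℕ} [hp : Fact p.Prime]

theorem norm_natCast_le_one (k : ℕ) : ‖(k : ℚ_[p])‖ ≤ 1 := mod_cast Padic.norm_int_le_one k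

theorem norm_natCast_eq_one_of_lt {n : ℕ} (h0 : n ≠ 0) (hn : n < p) : ‖(n : ℚ_[p])‖ = 1 :=
  Padic.norm_natCast_eq_one_iff.2 (Nat.coprime_of_lt_prime h0 hn hp.out)

theorem norm_intCast_sub_le_of_modEq {x y : ℤ} (h : x ≡ y [ZMOD p ^ 2]) :
    ‖(x : ℚ_[p]) - y‖ ≤ ‖(p : ℚ_[p])‖ ^ 2 := by
  have := (Padic.norm_int_le_pow_iff_dvd (p := p) (x - y) 2).2
    (by exact_mod_cast (Int.modEq_iff_dvd.1 h.symm))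
  rwa [← norm_pow, Padic.norm_p_pow, ← Int.cast_sub]

theorem exists_eq_add_p_sq_mul {x y : ℚ_[p]} (h : ‖x - y‖ ≤ ‖(p : ℚ_[p])‖ ^ 2) :
    ∃ z : ℤ_[p], x = y + (p : ℚ_[p]) ^ 2 * z := by
  have hp0 : (p : ℚ_[p]) ^ 2 ≠ 0 := pow_ne_zero 2 (Nat.cast_ne_zero.2 hp.out.ne_zero)
  refine ⟨⟨(x - y) / (p : ℚ_[p]) ^ 2, ?_⟩, ?_⟩
  · rw [norm_div, norm_pow]
    exact div_le_one_of_le₀ h (by positivity)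
  · change x = y + _ * ((x - y) / _)
    rw [mul_div_cancel₀ _ hp0, add_sub_cancel]

theorem norm_one_div_pow_sub_pow_le {k : ℕ} (hk : p.Coprime k) {m e : ℕ}
    (he : m + e = p * (p - 1)) :
    ‖1 / (k : ℚ_[p]) ^ m - (k : ℚ_[p]) ^ e‖ ≤ ‖(p : ℚ_[p])‖ ^ 2 := by
  have hk1 : ‖(k : ℚ_[p])‖ = 1 := Padic.norm_natCast_eq_one_iff.2 hk
  have hk0 : (k : ℚ_[p]) ≠ 0 := norm_ne_zero_iff.1 (by rw [hk1]; exact one_ne_zero)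
  have heuler : (1 : ℤ) ≡ ((k ^ (m + e) : ℕ) : ℤ) [ZMOD p ^ 2] := by
    have := Nat.ModEq.pow_totient (Nat.Coprime.pow_right 2 hk.symm)
    rw [Nat.totient_prime_pow_succ hp.out 1, pow_one, ← he] at this
    exact_mod_cast this.symm
  have hsplit : 1 / (k : ℚ_[p]) ^ m - (k : ℚ_[p]) ^ e = (1 - (k : ℚ_[p]) ^ (m + e)) / k ^ m := by
    field_simp
    ring
  have := norm_intCast_sub_le_of_modEq (p := p) heuler
  push_cast at this
  rwa [hsplit, norm_div, norm_pow, hk1, one_pow, div_one]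

theorem norm_sum_one_div_pow_sub_powerSum_le {m e : ℕ} (he : m + e = p * (p - 1)) (he0 : e ≠ 0) :
    ‖∑ k ∈ Icc 1 (p - 1), 1 / (k : ℚ_[p]) ^ m - powerSum p e‖ ≤ ‖(p : ℚ_[p])‖ ^ 2 := by
  have hrange : range p = insert 0 (Icc 1 (p - 1)) := by
    ext k
    simp only [mem_range, mem_insert, mem_Icc]
    have := hp.out.pos
    omega
  have hS : (powerSum p e : ℚ_[p]) = ∑ k ∈ Icc 1 (p - 1), (k : ℚ_[p]) ^ e := by
    simp [powerSum, hrange, he0]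
  rw [hS, ← sum_sub_distrib]
  refine IsUltrametricDist.norm_sum_le_of_forall_le_of_nonneg (by positivity) fun k hk ↦ ?_
  obtain ⟨hk1, hkp⟩ := mem_Icc.1 hk
  exact norm_one_div_pow_sub_pow_le (Nat.coprime_of_lt_prime (by omega) (by omega) hp.out) he

theorem powerSum_eq_p_mul_bernoulli_add (n : ℕ) :
    (powerSum p n : ℚ_[p]) = p * bernoulli n + ∑ i ∈ range n,
      (p * bernoulli i : ℚ_[p]) * ((n + 1).choose i / (n + 1)) * (p : ℚ_[p]) ^ (n - i) := by
  have h := congrArg (fun q : ℚ ↦ (q : ℚ_[p])) (sum_range_pow p n)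
  push_cast at h
  rw [sum_range_succ] at h
  rw [powerSum]
  push_cast
  rw [h, add_comm]
  congr 1
  · rw [Nat.choose_succ_self_right, Nat.add_sub_cancel_left, pow_one]
    push_cast
    field_simp
  · refine sum_congr rfl fun i hi ↦ ?_
    rw [show n + 1 - i = n - i + 1 by have := mem_range.1 hi; omega]
    ring

theorem norm_faulhaber_term_le {n : ℕ} (hn : n + 1 < p) (i : ℕ) :
    ‖(p * bernoulli i : ℚ_[p]) * ((n + 1).choose i / (n + 1)) * (p : ℚ_[p]) ^ (n - i)‖ ≤
      ‖(p * bernoulli i : ℚ_[p])‖ * ‖(p : ℚ_[p])‖ ^ (n - i) := by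
  have hn1 : ‖((n : ℚ_[p]) + 1)‖ = 1 := mod_cast norm_natCast_eq_one_of_lt (by omega) hn
  rw [norm_mul, norm_mul, norm_div, hn1, div_one, norm_pow]
  gcongr
  exact mul_le_of_le_one_right (norm_nonneg _) (norm_natCast_le_one _)

theorem norm_p_mul_bernoulli_le_one {n : ℕ} (hn : n + 1 < p) :
    ‖(p * bernoulli n : ℚ_[p])‖ ≤ 1 := by
  induction n using Nat.strong_induction_on with
  | _ n ih =>
  rw [eq_sub_of_add_eq (powerSum_eq_p_mul_bernoulli_add n).symm, sub_eq_add_neg]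
  refine (IsUltrametricDist.norm_add_le_max _ _).trans (max_le (Padic.norm_int_le_one _) ?_)
  rw [norm_neg]
  refine IsUltrametricDist.norm_sum_le_of_forall_le_of_nonneg zero_le_one fun i hi ↦ ?_
  have hi := mem_range.1 hi
  refine (norm_faulhaber_term_le hn i).trans ?_
  exact mul_le_one₀ (ih i hi (by omega)) (by positivity)
    (pow_le_one₀ (norm_nonneg _) Padic.norm_p_lt_one.le)

theorem norm_bernoulli_le_one_of_odd (hp2 : p ≠ 2) {n : ℕ} (hn : Odd n) :
    ‖(bernoulli n : ℚ_[p])‖ ≤ 1 := by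
  obtain rfl | hn1 := eq_or_ne n 1
  · refine Padic.norm_rat_le_one ?_
    rw [bernoulli_one, show (-1 / 2 : ℚ).den = 2 by norm_num]
    exact fun h ↦ hp2 ((Nat.prime_dvd_prime_iff_eq hp.out Nat.prime_two).1 h)
  · rw [bernoulli_eq_zero_of_odd hn (by obtain ⟨j, rfl⟩ := hn; omega)]
    simp

theorem norm_powerSum_sub_p_mul_bernoulli_le {n : ℕ} (hn : Even n) (hnp : n + 1 < p) :
    ‖(powerSum p n : ℚ_[p]) - p * bernoulli n‖ ≤ ‖(p : ℚ_[p])‖ ^ 2 := by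
  rw [powerSum_eq_p_mul_bernoulli_add n, add_sub_cancel_left]
  refine IsUltrametricDist.norm_sum_le_of_forall_le_of_nonneg (by positivity) fun i hi ↦ ?_
  have hi := mem_range.1 hi
  refine (norm_faulhaber_term_le hnp i).trans ?_
  have hp1 : ‖(p : ℚ_[p])‖ ≤ 1 := Padic.norm_p_lt_one.le
  obtain rfl | hin := eq_or_ne i (n - 1)
  · have hodd : Odd (n - 1) := by obtain ⟨j, rfl⟩ := hn; exact ⟨j - 1, by omega⟩
    rw [norm_mul, show n - (n - 1) = 1 by omega, pow_one, sq]
    refine mul_le_mul_of_nonneg_right ?_ (norm_nonneg _)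
    exact mul_le_of_le_one_right (norm_nonneg _) (norm_bernoulli_le_one_of_odd (by omega) hodd)
  · exact (mul_le_of_le_one_left (by positivity) (norm_p_mul_bernoulli_le_one (by omega))).trans
      (pow_le_pow_of_le_one (norm_nonneg _) hp1 (by omega))

theorem norm_sub_div_succ_mul_le {m : ℕ} (hm : m + 1 < p) {x s t y : ℚ_[p]}
    (hxs : ‖x - s‖ ≤ ‖(p : ℚ_[p])‖ ^ 2) (hst : ‖(m + 1) * s - m * t‖ ≤ ‖(p : ℚ_[p])‖ ^ 2)
    (hty : ‖t - y‖ ≤ ‖(p : ℚ_[p])‖ ^ 2) :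
    ‖x - m / (m + 1) * y‖ ≤ ‖(p : ℚ_[p])‖ ^ 2 := by
  have hm1 : ‖(m : ℚ_[p]) + 1‖ = 1 := mod_cast norm_natCast_eq_one_of_lt (by omega) hm
  have hm0 : (m : ℚ_[p]) + 1 ≠ 0 := norm_ne_zero_iff.1 (by rw [hm1]; exact one_ne_zero)
  have hsplit : x - m / (m + 1) * y =
      ((m + 1) * (x - s) + ((m + 1) * s - m * t) + m * (t - y)) / (m + 1) := by
    field_simp
    ring
  rw [hsplit, norm_div, hm1, div_one]
  refine (IsUltrametricDist.norm_add_le_max _ _).trans (max_le ?_ ?_)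
  · refine (IsUltrametricDist.norm_add_le_max _ _).trans (max_le ?_ hst)
    rwa [norm_mul, hm1, one_mul]
  · rw [norm_mul]
    exact (mul_le_of_le_one_left (norm_nonneg _) (norm_natCast_le_one m)).trans hty

end Padic

end Glaisher

open Glaisher in
theorem stmt_18_general (p m : ℕ) [hp : Fact p.Prime]
    (hm : Even m) (hm2 : 2 ≤ m) (hm3 : m ≤ p - 3) :
    ∃ z : ℤ_[p], (∑ k ∈ Finset.Icc 1 (p - 1), 1 / (k : ℚ_[p]) ^ m) =
      ((m : ℚ_[p]) / ((m : ℚ_[p]) + 1)) * (p : ℚ_[p]) * (bernoulli (p - 1 - m) : ℚ_[p])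
      + (p : ℚ_[p]) ^ 2 * z := by
  have hpp : p ≤ p * (p - 1) := Nat.le_mul_of_pos_right _ (by omega)
  have hEuler := norm_sum_one_div_pow_sub_powerSum_le (p := p) (m := m) (e := p * (p - 1) - m)
    (by omega) (by omega)
  have hKummer := norm_intCast_sub_le_of_modEq (p := p)
    (succ_mul_powerSum_modEq hp.out (by omega) (by omega : m + 3 ≤ p))
  push_cast at hKummer
  have hFaulhaber := norm_powerSum_sub_p_mul_bernoulli_le (p := p)
    ((hp.out.even_sub_one (by omega)).tsub hm) (by omega)
  rw [mul_assoc]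
  exact exists_eq_add_p_sq_mul (norm_sub_div_succ_mul_le (by omega) hEuler hKummer hFaulhaber)

theorem stmt_18 (p m : ℕ) [hp : Fact p.Prime] (hp7 : 7 ≤ p)
    (hm : Even m) (hm2 : 2 ≤ m) (hm3 : m ≤ p - 3) :
    ∃ z : ℤ_[p], (∑ k ∈ Finset.Icc 1 (p - 1), 1 / (k : ℚ_[p]) ^ m) =
      ((m : ℚ_[p]) / ((m : ℚ_[p]) + 1)) * (p : ℚ_[p]) * (bernoulli (p - 1 - m) : ℚ_[p])
      + (p : ℚ_[p]) ^ 2 * z :=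
  stmt_18_general p m (hp := hp) hm hm2 hm3
end
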